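/- arXiv:1712.10010 — 9 statements merged into one kernel-verified Lean document; each statement's English description precedes it below -/
import Mathlib

section
/- For a path P_n on n vertices, the conflict-free connection number cfc(P_n) equals ⌈log₂ n⌉. -/
/-- `c` is a conflict-free connection coloring of `G`: every pair of distinct
vertices is joined by a path on which some color appears on exactly one edge. -/
def IsCFCColoring {V : Type*} (G : SimpleGraph V) (c : Sym2 V → ℕ) : Prop :=
  ∀ u v : V, u ≠ v → ∃ p : G.Walk u v, p.IsPath ∧
    ∃ col : ℕ, (p.edges.filter (fun e => c e = col)).length = 1

/-- The conflict-free connection number of `G`: the least `k` such that some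
coloring of the edges of `G` with colors `0, …, k-1` is a conflict-free
connection coloring. -/
noncomputable def cfcNum {V : Type*} [Fintype V] (G : SimpleGraph V) : ℕ :=
  sInf {k | ∃ c : Sym2 V → ℕ, (∀ e ∈ G.edgeSet, c e < k) ∧ IsCFCColoring G c}

open SimpleGraph

def edgeF (n : ℕ) (hn : 0 < n) (i : ℕ) : Sym2 (Fin n) :=
  s(⟨min i (n-1), by omega⟩, ⟨min (i+1) (n-1), by omega⟩)

lemma edgeF_eq (n : ℕ) (hn : 0 < n) (i : ℕ) (h : i + 1 < n) :
    edgeF n hn i = s(⟨i, by omega⟩, ⟨i+1, h⟩) := by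
  unfold edgeF
  congr 2 <;> omega

def pWalk (n : ℕ) (hn : 0 < n) (a : ℕ) : (d : ℕ) → (h : a + d < n) →
    (pathGraph n).Walk ⟨a, by omega⟩ ⟨a + d, h⟩
  | 0, h => SimpleGraph.Walk.nil
  | d+1, h => ((pWalk n hn a d (by omega)).concat
      (show (pathGraph n).Adj ⟨a+d, by omega⟩ ⟨a+d+1, by omega⟩ by
        rw [pathGraph_adj]; left; rfl)).copy rfl (Fin.ext (by simp; omega))

lemma pWalk_edges (n : ℕ) (hn : 0 < n) (a : ℕ) : ∀ (d : ℕ) (h : a + d < n),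
    (pWalk n hn a d h).edges = (List.range' a d).map (edgeF n hn)
  | 0, h => rfl
  | d+1, h => by
    rw [pWalk, SimpleGraph.Walk.edges_copy, SimpleGraph.Walk.edges_concat,
        pWalk_edges n hn a d (by omega)]
    rw [List.range'_concat, List.concat_eq_append, List.map_append]
    simp [edgeF_eq n hn (a+d) (by omega)]

lemma pWalk_support (n : ℕ) (hn : 0 < n) (a : ℕ) : ∀ (d : ℕ) (h : a + d < n),
    (pWalk n hn a d h).support.map Fin.val = List.range' a (d+1)
  | 0, h => rfl
  | d+1, h => by
    rw [pWalk, SimpleGraph.Walk.support_copy, SimpleGraph.Walk.support_concat,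
        List.map_append,
        pWalk_support n hn a d (by omega), List.range'_concat,
        List.range'_concat]
    rw [List.range'_concat]
    simp
    omega

lemma pWalk_isPath (n : ℕ) (hn : 0 < n) (a d : ℕ) (h : a + d < n) :
    (pWalk n hn a d h).IsPath := by
  rw [SimpleGraph.Walk.isPath_def]
  have h2 : ((pWalk n hn a d h).support.map Fin.val).Nodup := by
    rw [pWalk_support]; exact List.nodup_range'
  exact h2.of_map _

lemma count_parity (n : ℕ) (hn : 0 < n) (t : ℕ) (ht : t + 1 < n) {u v : Fin n}
    (p : (pathGraph n).Walk u v) :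
    Even (p.edges.count (edgeF n hn t)) ↔ (u.val ≤ t ↔ v.val ≤ t) := by
  induction p with
  | nil => simp
  | @cons a b w h q ih =>
    rw [SimpleGraph.Walk.edges_cons, List.count_cons]
    have hadj := (pathGraph_adj).1 h
    have hiff : edgeF n hn t = s(a, b) ↔
        (a.val = t ∧ b.val = t + 1 ∨ a.val = t + 1 ∧ b.val = t) := by
      rw [edgeF_eq n hn t ht, Sym2.eq_iff]
      constructor
      · rintro (⟨h1, h2⟩ | ⟨h1, h2⟩)
        · left; exact ⟨by rw [← h1], by rw [← h2]⟩
        · right; exact ⟨by rw [← h2], by rw [← h1]⟩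
      · rintro (⟨h1, h2⟩ | ⟨h1, h2⟩)
        · left; exact ⟨(Fin.ext h1.symm : (⟨t, by omega⟩ : Fin n) = a),
            (Fin.ext h2.symm : (⟨t+1, ht⟩ : Fin n) = b)⟩
        · right; exact ⟨(Fin.ext h2.symm : (⟨t, by omega⟩ : Fin n) = b),
            (Fin.ext h1.symm : (⟨t+1, ht⟩ : Fin n) = a)⟩
    simp only [beq_iff_eq]
    by_cases he : edgeF n hn t = s(a, b)
    · rw [if_pos he.symm, Nat.even_add_one, ih]
      have hc := hiff.1 he
      omega
    · rw [if_neg (fun hh => he hh.symm), Nat.add_zero, ih]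
      have hc : ¬(a.val = t ∧ b.val = t + 1 ∨ a.val = t + 1 ∧ b.val = t) :=
        fun x => he (hiff.2 x)
      omega

lemma path_edges_perm (n : ℕ) (hn : 0 < n) {u v : Fin n} (hlt : u.val < v.val)
    (p : (pathGraph n).Walk u v) (hp : p.IsPath) :
    p.edges.Perm ((List.range' u.val (v.val - u.val)).map (edgeF n hn)) := by
  have hnodupE : p.edges.Nodup := hp.isTrail.edges_nodup
  have hinj : ∀ i j : ℕ, i + 1 < n → j + 1 < n → edgeF n hn i = edgeF n hn j → i = j := by
    intro i j hi hj hij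
    rw [edgeF_eq n hn i hi, edgeF_eq n hn j hj, Sym2.eq_iff] at hij
    rcases hij with ⟨h1, h2⟩ | ⟨h1, h2⟩ <;>
      simp only [Fin.mk.injEq] at h1 h2 <;> omega
  have hnodupL : ((List.range' u.val (v.val - u.val)).map (edgeF n hn)).Nodup := by
    refine List.Nodup.map_on ?_ List.nodup_range'
    intro x hx y hy hxy
    rw [List.mem_range'] at hx hy
    obtain ⟨i, hi, rfl⟩ := hx
    obtain ⟨j, hj, rfl⟩ := hy
    have : v.val < n := v.isLt
    exact hinj _ _ (by omega) (by omega) hxy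
  rw [List.perm_ext_iff_of_nodup hnodupE hnodupL]
  intro e
  have hvn : v.val < n := v.isLt
  constructor
  · intro he
    have heS := p.edges_subset_edgeSet he
    obtain ⟨t, ht, hte⟩ : ∃ t, t + 1 < n ∧ e = edgeF n hn t := by
      induction e using Sym2.ind with
      | _ x y =>
        rw [SimpleGraph.mem_edgeSet, pathGraph_adj] at heS
        rcases heS with hxy | hxy
        · refine ⟨x.val, by omega, ?_⟩
          rw [edgeF_eq n hn _ (by omega)]
          exact Sym2.eq_iff.2 (Or.inl ⟨Fin.ext rfl, Fin.ext hxy.symm⟩)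
        · refine ⟨y.val, by omega, ?_⟩
          rw [edgeF_eq n hn _ (by omega)]
          exact Sym2.eq_iff.2 (Or.inr ⟨Fin.ext hxy.symm, Fin.ext rfl⟩)
    rw [hte] at he ⊢
    have hc1 : p.edges.count (edgeF n hn t) ≤ 1 := hp.isTrail.count_edges_le_one _
    have hcpos : 0 < p.edges.count (edgeF n hn t) := List.count_pos_iff.2 he
    have hpar := count_parity n hn t ht p
    have htuv : u.val ≤ t ∧ t < v.val := by
      by_contra hcon
      have hev : Even (p.edges.count (edgeF n hn t)) := by rw [hpar]; omega
      obtain ⟨r, hr⟩ := hev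
      omega
    rw [List.mem_map]
    exact ⟨t, List.mem_range'.2 ⟨t - u.val, by omega, by omega⟩, rfl⟩
  · intro he
    rw [List.mem_map] at he
    obtain ⟨t, htm, rfl⟩ := he
    rw [List.mem_range'] at htm
    obtain ⟨i, hi, rfl⟩ := htm
    have ht : (u.val + 1 * i) + 1 < n := by omega
    have hpar := count_parity n hn (u.val + 1 * i) ht p
    rw [← List.count_pos_iff]
    by_contra h0
    have hev : Even (p.edges.count (edgeF n hn (u.val + 1 * i))) := ⟨0, by omega⟩
    have := hpar.1 hev
    omega

lemma countP_range'_eq (P : ℕ → Prop) [DecidablePred P] (a d : ℕ) :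
    (List.range' a d).countP (fun i => decide (P i)) = ((Finset.Ico a (a+d)).filter P).card := by
  rw [Nat.Ico_eq_range']
  simp [Finset.filter, Finset.card, Nat.add_sub_cancel_left, List.countP_eq_length_filter,
    Multiset.filter_coe]

lemma path_filter_card (n : ℕ) (hn : 0 < n) {u v : Fin n} (hlt : u.val < v.val)
    (p : (pathGraph n).Walk u v) (hp : p.IsPath) (c : Sym2 (Fin n) → ℕ) (col : ℕ) :
    (p.edges.filter (fun e => c e = col)).length
      = ((Finset.Ico u.val v.val).filter (fun i => c (edgeF n hn i) = col)).card := by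
  have hperm := (path_edges_perm n hn hlt p hp).filter (fun e => decide (c e = col))
  rw [hperm.length_eq, List.filter_map, List.length_map, ← List.countP_eq_length_filter]
  have := countP_range'_eq (fun i => c (edgeF n hn i) = col) u.val (v.val - u.val)
  rw [show u.val + (v.val - u.val) = v.val by omega] at this
  exact this

lemma seq_bound (f : ℕ → ℕ) : ∀ (k : ℕ) (S : Finset ℕ), S.card ≤ k →
    ∀ a b : ℕ, (∀ i, a ≤ i → i < b → f i ∈ S) →
    (∀ a' b', a ≤ a' → a' < b' → b' ≤ b →
      ∃ col, ((Finset.Ico a' b').filter (fun i => f i = col)).card = 1) →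
    b - a ≤ 2 ^ k - 1 := by
  intro k
  induction k with
  | zero =>
    intro S hS a b hmem _
    rcases le_or_gt b a with hba | hab
    · simp; omega
    · have h1 : f a ∈ S := hmem a le_rfl hab
      have h2 : S = ∅ := Finset.card_eq_zero.1 (by omega)
      rw [h2] at h1
      simp at h1
  | succ k ih =>
    intro S hS a b hmem huniq
    have hpow : 1 ≤ 2 ^ k := Nat.one_le_two_pow
    have hpow2 : 2 ^ (k+1) = 2 * 2 ^ k := by ring
    rcases le_or_gt b a with hba | hab
    · omega
    · obtain ⟨col, hcol⟩ := huniq a b le_rfl hab le_rfl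
      obtain ⟨p, hp⟩ := Finset.card_eq_one.1 hcol
      have hpmem := Finset.mem_filter.1 (hp ▸ Finset.mem_singleton_self p)
      rw [Finset.mem_Ico] at hpmem
      have hponly : ∀ q, a ≤ q → q < b → f q = col → q = p := by
        intro q h1 h2 h3
        have hq : q ∈ (Finset.Ico a b).filter (fun i => f i = col) :=
          Finset.mem_filter.2 ⟨Finset.mem_Ico.2 ⟨h1, h2⟩, h3⟩
        rw [hp] at hq
        exact Finset.mem_singleton.1 hq
      have hcolS : col ∈ S := hpmem.2 ▸ hmem p hpmem.1.1 hpmem.1.2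
      have hScard : (S.erase col).card ≤ k := by
        rw [Finset.card_erase_of_mem hcolS]; omega
      have h1 := ih (S.erase col) hScard a p
        (fun i h1 h2 => Finset.mem_erase.2
          ⟨fun hc => by have := hponly i h1 (by omega) hc; omega,
           hmem i h1 (by omega)⟩)
        (fun a' b' ha hb hc => huniq a' b' ha hb (by omega))
      have h2 := ih (S.erase col) hScard (p+1) b
        (fun i h1 h2 => Finset.mem_erase.2
          ⟨fun hc => by have := hponly i (by omega) h2 hc; omega,
           hmem i (by omega) h2⟩)
        (fun a' b' ha hb hc => huniq a' b' (by omega) hb hc)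
      omega

lemma ruler_unique (v : ℕ) {x y : ℕ} (hxy : x < y)
    (hx : (x+1).factorization 2 = v) (hy : (y+1).factorization 2 = v)
    (hmax : ∀ i, x ≤ i → i ≤ y → ((i+1).factorization 2) ≤ v) : False := by
  set j := x + 1 with hj
  set j' := y + 1 with hj'
  have hj0 : j ≠ 0 := by omega
  have hj'0 : j' ≠ 0 := by omega
  have hdj : 2 ^ v ∣ j := hx ▸ Nat.ordProj_dvd j 2
  have hdj' : 2 ^ v ∣ j' := hy ▸ Nat.ordProj_dvd j' 2
  set o := j / 2 ^ v with ho
  set o' := j' / 2 ^ v with ho'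
  have hpow : 0 < 2 ^ v := Nat.two_pow_pos v
  have hjo : j = 2 ^ v * o := (Nat.mul_div_cancel' hdj).symm
  have hjo' : j' = 2 ^ v * o' := (Nat.mul_div_cancel' hdj').symm
  have hodd : ¬ 2 ∣ o := by
    have := Nat.not_dvd_ordCompl Nat.prime_two hj0
    rwa [hx] at this
  have hoo' : o < o' := by
    have : 2 ^ v * o < 2 ^ v * o' := by omega
    exact Nat.lt_of_mul_lt_mul_left this
  have ho2 : o % 2 = 1 := by
    rcases Nat.mod_two_eq_zero_or_one o with h | h
    · exact absurd (Nat.dvd_of_mod_eq_zero h) hodd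
    · exact h
  set m := 2 ^ v * (o + 1) with hm
  have hm0 : m ≠ 0 := by positivity
  have hmeq : m = 2 ^ (v+1) * ((o+1)/2) := by
    rw [hm, pow_succ]
    have : o + 1 = 2 * ((o+1)/2) := by omega
    calc 2 ^ v * (o + 1) = 2 ^ v * (2 * ((o+1)/2)) := by rw [← this]
    _ = 2 ^ v * 2 * ((o+1)/2) := by ring
  have hdvd : 2 ^ (v+1) ∣ m := ⟨(o+1)/2, hmeq⟩
  have hvm : v + 1 ≤ m.factorization 2 :=
    (Nat.Prime.pow_dvd_iff_le_factorization Nat.prime_two hm0).1 hdvd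
  have hjm : j < m := by
    have : 2 ^ v * o < 2 ^ v * (o+1) := by
      exact mul_lt_mul_of_pos_left (by omega) hpow
    omega
  have hmj' : m ≤ j' := by
    have : 2 ^ v * (o+1) ≤ 2 ^ v * o' := Nat.mul_le_mul_left _ (by omega)
    omega
  have hmem : x ≤ m - 1 ∧ m - 1 ≤ y := by omega
  have := hmax (m-1) hmem.1 hmem.2
  rw [show m - 1 + 1 = m by omega] at this
  omega

lemma ruler (a b : ℕ) (hab : a < b) :
    ∃ v, ((Finset.Ico a b).filter (fun i => (i+1).factorization 2 = v)).card = 1 := by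
  have hne : ((Finset.Ico a b).image (fun i => (i+1).factorization 2)).Nonempty := by
    refine Finset.Nonempty.image ?_ _
    rw [Finset.nonempty_Ico]; exact hab
  set v := ((Finset.Ico a b).image (fun i => (i+1).factorization 2)).max' hne with hv
  obtain ⟨p, hpmem, hpv⟩ := Finset.mem_image.1 (((Finset.Ico a b).image _).max'_mem hne)
  have hmax : ∀ i, a ≤ i → i < b → ((i+1).factorization 2) ≤ v :=
    fun i h1 h2 => Finset.le_max'
      ((Finset.Ico a b).image (fun i => (i+1).factorization 2)) ((i+1).factorization 2)
      (Finset.mem_image.2 ⟨i, Finset.mem_Ico.2 ⟨h1, h2⟩, rfl⟩)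
  rw [Finset.mem_Ico] at hpmem
  refine ⟨v, Finset.card_eq_one.2 ⟨p, ?_⟩⟩
  rw [Finset.eq_singleton_iff_unique_mem]
  constructor
  · exact Finset.mem_filter.2 ⟨Finset.mem_Ico.2 hpmem, hpv⟩
  · intro x hx
    obtain ⟨hxI, hxv⟩ := Finset.mem_filter.1 hx
    rw [Finset.mem_Ico] at hxI
    by_contra hne2
    rcases lt_or_gt_of_ne hne2 with h | h
    · exact ruler_unique v h hxv hpv (fun i h1 h2 => hmax i (by omega) (by omega))
    · exact ruler_unique v h hpv hxv (fun i h1 h2 => hmax i (by omega) (by omega))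

def rulerCol (n : ℕ) : Sym2 (Fin n) → ℕ :=
  Sym2.lift ⟨fun x y => (min x.val y.val + 1).factorization 2,
    fun x y => by simp only [min_comm]⟩

lemma rulerCol_edgeF (n : ℕ) (hn : 0 < n) (i : ℕ) (h : i + 1 < n) :
    rulerCol n (edgeF n hn i) = (i+1).factorization 2 := by
  rw [edgeF_eq n hn i h, rulerCol, Sym2.lift_mk]
  simp only
  congr 2
  omega

lemma cfc_upper (n : ℕ) (hn : 2 ≤ n) :
    ∃ c : Sym2 (Fin n) → ℕ, (∀ e ∈ (pathGraph n).edgeSet, c e < Nat.clog 2 n) ∧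
      IsCFCColoring (pathGraph n) c := by
  have hn0 : 0 < n := by omega
  refine ⟨rulerCol n, ?_, ?_⟩
  · intro e he
    induction e using Sym2.ind with
    | _ x y =>
      rw [SimpleGraph.mem_edgeSet, pathGraph_adj] at he
      have hx : x.val < n := x.isLt
      have hy : y.val < n := y.isLt
      set j := min x.val y.val + 1 with hj
      have hcval : rulerCol n s(x,y) = j.factorization 2 := by rw [rulerCol, Sym2.lift_mk]
      rw [hcval]
      have hjn : j ≤ n - 1 := by omega
      have hdvd : 2 ^ (j.factorization 2) ∣ j := Nat.ordProj_dvd j 2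
      have hle : 2 ^ (j.factorization 2) ≤ j := Nat.le_of_dvd (by omega) hdvd
      have hclog : n ≤ 2 ^ Nat.clog 2 n := Nat.le_pow_clog one_lt_two n
      have hlt : 2 ^ (j.factorization 2) < 2 ^ Nat.clog 2 n := by omega
      exact (Nat.pow_lt_pow_iff_right one_lt_two).1 hlt
  · have main : ∀ (u v : Fin n), u.val < v.val → ∃ p : (pathGraph n).Walk u v, p.IsPath ∧
        ∃ col, (p.edges.filter (fun e => rulerCol n e = col)).length = 1 := by
      intro u v hlt
      have hv : v.val < n := v.isLt
      have hd : u.val + (v.val - u.val) < n := by omega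
      have hpath := pWalk_isPath n hn0 u.val (v.val - u.val) hd
      refine ⟨(pWalk n hn0 u.val (v.val - u.val) hd).copy (Fin.ext rfl)
        (by apply Fin.ext; simp; omega), ?_, ?_⟩
      · rw [SimpleGraph.Walk.isPath_copy]; exact hpath
      · obtain ⟨col, hcol⟩ := ruler u.val v.val hlt
        refine ⟨col, ?_⟩
        rw [path_filter_card n hn0 hlt _
          ((SimpleGraph.Walk.isPath_copy _ _ _).2 hpath) (rulerCol n) col]
        have heq : (Finset.Ico u.val v.val).filter (fun i => rulerCol n (edgeF n hn0 i) = col)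
             = (Finset.Ico u.val v.val).filter (fun i => (i+1).factorization 2 = col) := by
          apply Finset.filter_congr
          intro i hi
          rw [Finset.mem_Ico] at hi
          rw [rulerCol_edgeF n hn0 i (by omega)]
        rw [heq]
        exact hcol
    intro u v huv
    rcases lt_trichotomy u.val v.val with h | h | h
    · exact main u v h
    · exact absurd (Fin.ext h) huv
    · obtain ⟨p, hp, col, hcol⟩ := main v u h
      refine ⟨p.reverse, hp.reverse, col, ?_⟩
      rw [SimpleGraph.Walk.edges_reverse, List.filter_reverse, List.length_reverse]
      exact hcol

lemma cfc_lower (n k : ℕ) (hn : 2 ≤ n) (c : Sym2 (Fin n) → ℕ)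
    (hc : ∀ e ∈ (pathGraph n).edgeSet, c e < k) (hcfc : IsCFCColoring (pathGraph n) c) :
    Nat.clog 2 n ≤ k := by
  have hn0 : 0 < n := by omega
  have key := seq_bound (fun i => c (edgeF n hn0 i)) k (Finset.range k)
    (by simp) 0 (n-1)
    (by
      intro i _ hi
      refine Finset.mem_range.2 (hc _ ?_)
      rw [edgeF_eq n hn0 i (by omega), SimpleGraph.mem_edgeSet, pathGraph_adj]
      left; rfl)
    (by
      intro a' b' _ hab hbn
      obtain ⟨p, hp, col, hcol⟩ := hcfc ⟨a', by omega⟩ ⟨b', by omega⟩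
        (by simp [Fin.ext_iff]; omega)
      refine ⟨col, ?_⟩
      rw [← path_filter_card n hn0 (show a' < b' from hab) p hp c col]
      exact hcol)
  have hp : 1 ≤ 2 ^ k := Nat.one_le_two_pow
  exact (Nat.clog_le_iff_le_pow one_lt_two).2 (by omega)


/-- For the path `P_n` on `n ≥ 2` vertices, `cfc(P_n) = ⌈log₂ n⌉`. -/
theorem cfc_pathGraph (n : ℕ) (hn : 2 ≤ n) :
    cfcNum (SimpleGraph.pathGraph n) = Nat.clog 2 n := by
  apply le_antisymm
  · exact Nat.sInf_le (cfc_upper n hn)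
  · refine le_csInf ⟨_, cfc_upper n hn⟩ ?_
    rintro k ⟨c, hc, hcfc⟩
    exact cfc_lower n k hn c hc hcfc
end

section
/- For a connected graph G on n ≥ 2 vertices, cfc(G) = n−1 if and only if G is the star K_{1,n−1}. -/
section Helpers
open SimpleGraph


lemma list_eq_singleton {α : Type*} {l : List α} {e : α} (hnd : l.Nodup) (he : e ∈ l)
    (hall : ∀ x ∈ l, x = e) : l = [e] := by
  cases l with
  | nil => simp at he
  | cons a t =>
    have ha : a = e := hall a (by simp)
    subst ha
    cases t with
    | nil => rfl
    | cons b t' =>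
      have hb : b = a := hall b (by simp)
      subst hb
      simp at hnd

lemma filter_length_one {α : Type*} [DecidableEq α] (c : α → ℕ) {l : List α} {e : α}
    (he : e ∈ l) (hnd : l.Nodup) (h : ∀ e' ∈ l, c e' = c e → e' = e) :
    (l.filter (fun x => c x = c e)).length = 1 := by
  have h1 : l.filter (fun x => c x = c e) = [e] := by
    apply list_eq_singleton (hnd.filter _)
    · exact List.mem_filter.2 ⟨he, by simp⟩
    · intro x hx
      exact h x (List.mem_filter.1 hx).1 (by simpa using (List.mem_filter.1 hx).2)
  rw [h1]; rfl

lemma adj_pair_cfc {V : Type*} {G : SimpleGraph V} {u w : V} (h : G.Adj u w) (c : Sym2 V → ℕ) :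
    ∃ p : G.Walk u w, p.IsPath ∧ ∃ col : ℕ, (p.edges.filter (fun e => c e = col)).length = 1 := by
  refine ⟨(SimpleGraph.Path.singleton h).1, (SimpleGraph.Path.singleton h).2, c s(u,w), ?_⟩
  simp [SimpleGraph.Path.singleton]


lemma connected_sdiff_of_reachable {V : Type*} {G : SimpleGraph V} (hG : G.Connected)
    {v w : V} (hr : (G \ fromEdgeSet {s(v,w)}).Reachable v w) :
    (G \ fromEdgeSet {s(v,w)}).Connected := by
  have key : ∀ {a b : V}, G.Walk a b → (G \ fromEdgeSet {s(v,w)}).Reachable a b := by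
    intro a b p
    induction p with
    | nil => exact Reachable.refl _
    | @cons a x b h' p ih =>
      by_cases he : s(a, x) = s(v, w)
      · rw [Sym2.eq_iff] at he
        rcases he with ⟨rfl, rfl⟩ | ⟨rfl, rfl⟩
        · exact hr.trans ih
        · exact hr.symm.trans ih
      · have hadj : (G \ fromEdgeSet {s(v,w)}).Adj a x := by
          simp only [sdiff_adj, fromEdgeSet_adj, Set.mem_singleton_iff]
          exact ⟨h', by tauto⟩
        exact hadj.reachable.trans ih
  have hne : Nonempty V := hG.nonempty
  exact ⟨fun a b => key (hG.preconnected a b).some⟩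

lemma exists_spanning_tree {V : Type*} [Fintype V] (G : SimpleGraph V) (hG : G.Connected) :
    ∃ T : SimpleGraph V, T ≤ G ∧ T.IsTree := by
  classical
  suffices H : ∀ (m : ℕ) (G : SimpleGraph V), G.edgeSet.ncard = m → G.Connected →
      ∃ T : SimpleGraph V, T ≤ G ∧ T.IsTree from H _ G rfl hG
  intro m
  induction m using Nat.strong_induction_on with
  | _ m ih =>
    intro G hm hG
    by_cases hac : G.IsAcyclic
    · exact ⟨G, le_refl _, ⟨hG, hac⟩⟩
    · rw [isAcyclic_iff_forall_adj_isBridge] at hac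
      push_neg at hac
      obtain ⟨v, w, hadj, hbr⟩ := hac
      rw [isBridge_iff] at hbr
      push_neg at hbr
      have hr : (G \ fromEdgeSet {s(v,w)}).Reachable v w := hbr
      set G' := G \ fromEdgeSet {s(v,w)} with hG'
      have hle : G' ≤ G := sdiff_le
      have hconn : G'.Connected := connected_sdiff_of_reachable hG hr
      have hss : G'.edgeSet ⊂ G.edgeSet := by
        constructor
        · exact edgeSet_mono hle
        · intro hsub
          have h1 : s(v,w) ∈ G.edgeSet := hadj
          have h2 : s(v,w) ∉ G'.edgeSet := by
            simp [hG', mem_edgeSet, fromEdgeSet_adj, hadj.ne]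
          exact h2 (hsub h1)
      have hlt : G'.edgeSet.ncard < m := by
        rw [← hm]
        exact Set.ncard_lt_ncard hss (Set.toFinite _)
      obtain ⟨T, hT1, hT2⟩ := ih _ hlt G' rfl hconn
      exact ⟨T, hT1.trans hle, hT2⟩


lemma star_path_edges {V : Type*} {G : SimpleGraph V} {v : V}
    (hstar : ∀ x y : V, G.Adj x y ↔ x ≠ y ∧ (x = v ∨ y = v))
    {u w : V} (hu : u ≠ v) (hw : w ≠ v) (huw : u ≠ w)
    (p : G.Walk u w) (hp : p.IsPath) : p.edges = [s(u, v), s(v, w)] := by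
  cases p with
  | nil => exact absurd rfl huw
  | @cons _ x _ h q =>
    obtain ⟨-, hx⟩ := (hstar _ _).1 h
    rcases hx with h1 | h1
    · exact absurd h1 hu
    · subst x
      cases q with
      | nil => exact absurd rfl hw.symm
      | @cons _ y _ h' r =>
        have hy : y ≠ v := (ne_of_adj _ h').symm
        cases r with
        | nil => simp
        | @cons _ z _ h'' r' =>
          obtain ⟨-, hz⟩ := (hstar _ _).1 h''
          rcases hz with h2 | h2
          · exact absurd h2 hy
          · subst z
            exfalso
            have hnd := hp.support_nodup
            simp [Walk.support_cons] at hnd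

lemma card_ne_eq {V : Type*} [Fintype V] [DecidableEq V] (v : V) :
    Fintype.card {u : V // u ≠ v} = Fintype.card V - 1 := by
  have := Fintype.card_subtype_compl (fun u : V => u = v)
  rw [Fintype.card_subtype_eq] at this
  convert this using 2

lemma star_coloring_exists {V : Type*} [Fintype V] {G : SimpleGraph V} {v : V}
    (hstar : ∀ x y : V, G.Adj x y ↔ x ≠ y ∧ (x = v ∨ y = v)) (hn : 2 ≤ Fintype.card V) :
    ∃ c : Sym2 V → ℕ, (∀ e ∈ G.edgeSet, c e < Fintype.card V - 1) ∧ IsCFCColoring G c := by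
  classical
  have hq := card_ne_eq v
  let q : {u : V // u ≠ v} ≃ Fin (Fintype.card V - 1) :=
    (Fintype.equivFin _).trans (finCongr hq)
  let c : Sym2 V → ℕ := fun e =>
    if h : ∃ u : {u : V // u ≠ v}, e = s(u.1, v) then (q h.choose : ℕ) else 0
  have heval : ∀ (u : V) (hu : u ≠ v), c s(u, v) = (q ⟨u, hu⟩ : ℕ) := by
    intro u hu
    have hex : ∃ z : {u : V // u ≠ v}, s(u, v) = s(z.1, v) := ⟨⟨u, hu⟩, rfl⟩
    have hspec := hex.choose_spec
    rw [Sym2.eq_iff] at hspec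
    have : hex.choose = ⟨u, hu⟩ := by
      rcases hspec with ⟨h1, -⟩ | ⟨h1, -⟩
      · exact Subtype.ext h1.symm
      · exact absurd h1 hu
    simp only [c, dif_pos hex, this]
  refine ⟨c, ?_, ?_⟩
  · intro e he
    induction e using Sym2.ind with
    | _ x y =>
      rw [mem_edgeSet] at he
      obtain ⟨hxy, hv⟩ := (hstar _ _).1 he
      rcases hv with rfl | rfl
      · rw [Sym2.eq_swap, heval y (Ne.symm hxy)]
        exact (q _).isLt
      · rw [heval x hxy]
        exact (q _).isLt
  · intro a b hab
    by_cases ha : a = v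
    · subst a
      exact adj_pair_cfc ((hstar _ _).2 ⟨hab, Or.inl rfl⟩) c
    by_cases hb : b = v
    · subst b
      exact adj_pair_cfc ((hstar _ _).2 ⟨hab, Or.inr rfl⟩) c
    · have h1 : G.Adj a v := (hstar _ _).2 ⟨ha, Or.inr rfl⟩
      have h2 : G.Adj v b := (hstar _ _).2 ⟨Ne.symm hb, Or.inl rfl⟩
      refine ⟨Walk.cons h1 (Walk.cons h2 Walk.nil), ?_, c s(a, v), ?_⟩
      · rw [Walk.isPath_def]
        simp only [Walk.support_cons, Walk.support_nil]
        refine List.nodup_cons.2 ⟨?_, List.nodup_cons.2 ⟨?_, List.nodup_cons.2 ⟨?_, List.nodup_nil⟩⟩⟩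
        · simp only [List.mem_cons, List.not_mem_nil, List.mem_singleton]
          intro h
          rcases h with h | h | h <;> first | exact ha h | exact hab h | exact h
        · simp only [List.mem_cons, List.not_mem_nil, List.mem_singleton]
          intro h
          rcases h with h | h
          · exact hb h.symm
          · exact h
        · simp
      · have e2 : c s(v, b) = (q ⟨b, hb⟩ : ℕ) := by rw [Sym2.eq_swap, heval b hb]
        have hne : c s(v, b) ≠ c s(a, v) := by
          rw [e2, heval a ha]
          intro hcontra
          have := q.injective (Fin.ext (by exact_mod_cast hcontra))
          exact hab (congrArg Subtype.val this).symm
        simp [Walk.edges_cons, List.filter, hne]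

lemma star_lower {V : Type*} [Fintype V] {G : SimpleGraph V} {v : V}
    (hstar : ∀ x y : V, G.Adj x y ↔ x ≠ y ∧ (x = v ∨ y = v))
    {k : ℕ} {c : Sym2 V → ℕ} (hbound : ∀ e ∈ G.edgeSet, c e < k)
    (hcfc : IsCFCColoring G c) : Fintype.card V - 1 ≤ k := by
  classical
  have hinj : ∀ u w : V, (hu : u ≠ v) → (hw : w ≠ v) → u ≠ w → c s(u, v) ≠ c s(w, v) := by
    intro u w hu hw huw heq
    obtain ⟨p, hp, col, hcol⟩ := hcfc u w huw
    rw [star_path_edges hstar hu hw huw p hp] at hcol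
    have h2 : c s(v, w) = c s(u, v) := by rw [Sym2.eq_swap, ← heq]
    by_cases hc : c s(u, v) = col
    · simp [List.filter, hc, h2] at hcol
    · simp [List.filter, hc, h2] at hcol
  let f : {u : V // u ≠ v} → Fin k := fun u =>
    ⟨c s(u.1, v), hbound _ ((mem_edgeSet G).2 ((hstar _ _).2 ⟨u.2, Or.inr rfl⟩))⟩
  have hfinj : Function.Injective f := by
    intro a b hab
    by_contra hne
    have : a.1 ≠ b.1 := fun h => hne (Subtype.ext h)
    exact hinj a.1 b.1 a.2 b.2 this (by simpa [f, Fin.ext_iff] using hab)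
  have := Fintype.card_le_of_injective f hfinj
  rwa [card_ne_eq, Fintype.card_fin] at this

lemma tree_pair_coloring {V : Type*} [Fintype V] {G T : SimpleGraph V}
    (hTG : T ≤ G) (hT : T.IsTree) {e1 e2 : Sym2 V}
    (h1 : e1 ∈ T.edgeSet) (h2 : e2 ∈ T.edgeSet) (hne : e1 ≠ e2)
    (hsafe : ∀ a x b : V, e1 = s(a, x) → e2 = s(x, b) → G.Adj a b)
    (hn : 3 ≤ Fintype.card V) :
    ∃ c : Sym2 V → ℕ, (∀ e ∈ G.edgeSet, c e < Fintype.card V - 2) ∧ IsCFCColoring G c := by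
  classical
  letI : Fintype T.edgeSet := Fintype.ofFinite _
  have hcard : T.edgeFinset.card = Fintype.card V - 1 := by
    have := hT.card_edgeFinset; omega
  set s' : Finset (Sym2 V) := T.edgeFinset.erase e1 with hs'
  have h2' : e2 ∈ s' := Finset.mem_erase.2 ⟨hne.symm, mem_edgeFinset.2 h2⟩
  have hcard' : s'.card = Fintype.card V - 2 := by
    rw [hs', Finset.card_erase_of_mem (mem_edgeFinset.2 h1), hcard]
    omega
  let q : {e // e ∈ s'} ≃ Fin (Fintype.card V - 2) := s'.equivFin.trans (finCongr hcard')
  let c : Sym2 V → ℕ := fun e =>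
    if h : e ∈ s' then (q ⟨e, h⟩ : ℕ) else if e = e1 then (q ⟨e2, h2'⟩ : ℕ) else 0
  have hcmem : ∀ (e) (h : e ∈ s'), c e = (q ⟨e, h⟩ : ℕ) := by
    intro e h
    simp only [c, dif_pos h]
  have hce1 : c e1 = (q ⟨e2, h2'⟩ : ℕ) := by
    have hx : e1 ∉ s' := Finset.notMem_erase _ _
    simp [c, hx]
  have hpos : 0 < Fintype.card V - 2 := by omega
  refine ⟨c, ?_, ?_⟩
  · intro e _
    by_cases h : e ∈ s'
    · rw [hcmem e h]; exact (q _).isLt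
    · by_cases h' : e = e1
      · rw [h', hce1]; exact (q _).isLt
      · simp only [c, dif_neg h, if_neg h']; exact hpos
  · intro u w huw
    by_cases hadj : G.Adj u w
    · exact adj_pair_cfc hadj c
    obtain ⟨p0, hp0, -⟩ := hT.existsUnique_path u w
    have hp_edges : ∀ e ∈ p0.edges, e ∈ G.edgeSet :=
      fun e he => edgeSet_mono hTG (p0.edges_subset_edgeSet he)
    refine ⟨p0.transfer G hp_edges, hp0.transfer hp_edges, ?_⟩
    rw [Walk.edges_transfer]
    have hnd : p0.edges.Nodup := hp0.isTrail.edges_nodup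
    by_cases hex : ∃ e ∈ p0.edges, e ≠ e1 ∧ e ≠ e2
    · obtain ⟨e, hemem, he1, he2⟩ := hex
      have hes' : e ∈ s' := Finset.mem_erase.2 ⟨he1, mem_edgeFinset.2 (p0.edges_subset_edgeSet hemem)⟩
      refine ⟨c e, filter_length_one c hemem hnd ?_⟩
      intro e' he' hc
      have he'T : e' ∈ T.edgeFinset := mem_edgeFinset.2 (p0.edges_subset_edgeSet he')
      by_cases h' : e' ∈ s'
      · rw [hcmem e' h', hcmem e hes'] at hc
        have := q.injective (Fin.ext (by exact_mod_cast hc))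
        exact congrArg Subtype.val this
      · have he'e1 : e' = e1 := by
          by_contra hx
          exact h' (Finset.mem_erase.2 ⟨hx, he'T⟩)
        rw [he'e1, hce1, hcmem e hes'] at hc
        have heq := q.injective (Fin.ext (by exact_mod_cast hc))
        exact absurd (congrArg Subtype.val heq).symm he2
    · push_neg at hex
      cases p0 with
      | nil => exact absurd rfl huw
      | @cons _ x _ h q0 =>
        cases q0 with
        | nil =>
          refine ⟨c s(u, w), ?_⟩
          simp [Walk.edges_cons]
        | @cons _ y _ h' r =>
          exfalso
          have hm1 : s(u, x) = e1 ∨ s(u, x) = e2 := by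
            have := hex s(u,x) (by simp [Walk.edges_cons])
            tauto
          have hm2 : s(x, y) = e1 ∨ s(x, y) = e2 := by
            have := hex s(x,y) (by simp [Walk.edges_cons])
            tauto
          simp only [Walk.edges_cons, List.nodup_cons, List.mem_cons] at hnd
          obtain ⟨hn1, hn2, -⟩ := hnd
          push_neg at hn1
          obtain ⟨hne12, hn1r⟩ := hn1
          have hcases : (s(u,x) = e1 ∧ s(x,y) = e2) ∨ (s(u,x) = e2 ∧ s(x,y) = e1) := by
            rcases hm1 with hA | hA <;> rcases hm2 with hB | hB
            · exact absurd (hA.trans hB.symm) hne12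
            · exact Or.inl ⟨hA, hB⟩
            · exact Or.inr ⟨hA, hB⟩
            · exact absurd (hA.trans hB.symm) hne12
          have hre : r.edges = [] := by
            by_contra hr
            obtain ⟨e3, he3⟩ := List.exists_mem_of_ne_nil _ hr
            have h12 : e3 = e1 ∨ e3 = e2 := by
              have := hex e3 (by simp [Walk.edges_cons]; tauto)
              tauto
            rcases hcases with ⟨hA, hB⟩ | ⟨hA, hB⟩ <;> rcases h12 with hC | hC
            · exact hn1r (by rw [hA, ← hC]; exact he3)
            · exact hn2 (by rw [hB, ← hC]; exact he3)
            · exact hn2 (by rw [hB, ← hC]; exact he3)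
            · exact hn1r (by rw [hA, ← hC]; exact he3)
          cases r with
          | nil =>
            rcases hcases with ⟨hA, hB⟩ | ⟨hA, hB⟩
            · exact hadj (hsafe u x w hA.symm hB.symm)
            · exact hadj (hsafe w x u (by rw [← hB]; exact Sym2.eq_swap) (by rw [← hA]; exact Sym2.eq_swap)).symm
          | cons h'' r' => simp [Walk.edges_cons] at hre


lemma sym2_eq_of_mem {α : Type*} {e : Sym2 α} {a c : α} (h : a ≠ c)
    (ha : a ∈ e) (hc : c ∈ e) : e = s(a, c) :=
  Sym2.eq_of_ne_mem h ha hc (Sym2.mem_mk_left a c) (Sym2.mem_mk_right a c)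

lemma tree_star {V : Type*} {T : SimpleGraph V} (hT : T.IsTree)
    (hmeet : ∀ e1 ∈ T.edgeSet, ∀ e2 ∈ T.edgeSet, e1 ≠ e2 → ∃ z, z ∈ e1 ∧ z ∈ e2)
    (hex2 : ∃ a b : V, a ≠ b) :
    ∃ v : V, ∀ x y : V, T.Adj x y ↔ x ≠ y ∧ (x = v ∨ y = v) := by
  classical
  -- get an edge
  obtain ⟨a0, b0, hab0⟩ := hex2
  have hedge : ∃ a b : V, T.Adj a b := by
    obtain ⟨w⟩ := hT.isConnected.preconnected a0 b0
    cases w with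
    | nil => exact absurd rfl hab0
    | cons h q => exact ⟨_, _, h⟩
  obtain ⟨a, b, hab⟩ := hedge
  -- find a vertex contained in all edges
  have hcenter : ∃ v : V, ∀ g ∈ T.edgeSet, v ∈ g := by
    by_cases hall : ∀ g ∈ T.edgeSet, a ∈ g
    · exact ⟨a, hall⟩
    · push_neg at hall
      obtain ⟨f, hf, haf⟩ := hall
      have hfe : s(a, b) ≠ f := fun h => haf (h ▸ Sym2.mem_mk_left a b)
      obtain ⟨z, hz1, hz2⟩ := hmeet s(a,b) hab f hf hfe
      have hzb : z = b := by
        rw [Sym2.mem_iff] at hz1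
        rcases hz1 with rfl | rfl
        · exact absurd hz2 haf
        · rfl
      rw [hzb] at hz2
      obtain ⟨cc, hfc⟩ := Sym2.mem_iff_exists.1 hz2
      have hca : cc ≠ a := fun h => haf (hfc ▸ (h ▸ Sym2.mem_mk_right b cc))
      have hbc : T.Adj b cc := by rw [← mem_edgeSet, ← hfc]; exact hf
      refine ⟨b, fun g hg => ?_⟩
      by_contra hbg
      have hg1 : g ≠ s(a, b) := fun h => hbg (h ▸ Sym2.mem_mk_right a b)
      have hg2 : g ≠ f := fun h => hbg (h ▸ hfc ▸ Sym2.mem_mk_left b cc)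
      obtain ⟨z1, hz11, hz12⟩ := hmeet g hg s(a,b) hab hg1
      have hz1a : z1 = a := by
        rw [Sym2.mem_iff] at hz12
        rcases hz12 with rfl | rfl
        · rfl
        · exact absurd hz11 hbg
      rw [hz1a] at hz11
      obtain ⟨z2, hz21, hz22⟩ := hmeet g hg f hf hg2
      have hz2c : z2 = cc := by
        rw [hfc, Sym2.mem_iff] at hz22
        rcases hz22 with rfl | rfl
        · exact absurd hz21 hbg
        · rfl
      rw [hz2c] at hz21
      have hgac : g = s(a, cc) := sym2_eq_of_mem hca.symm hz11 hz21
      have hac : T.Adj a cc := by rw [← mem_edgeSet, ← hgac]; exact hg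
      -- two distinct paths from a to cc
      have hp2 : (Walk.cons hab (Walk.cons hbc Walk.nil)).IsPath := by
        rw [Walk.isPath_def]
        simp only [Walk.support_cons, Walk.support_nil, List.nodup_cons, List.mem_cons,
          List.mem_singleton, List.not_mem_nil]
        refine ⟨?_, ?_, ?_⟩
        · push_neg
          exact ⟨hab.ne, hca.symm, trivial⟩
        · push_neg
          exact ⟨hbc.ne, trivial⟩
        · simp
      have := hT.IsAcyclic.path_unique (SimpleGraph.Path.singleton hac)
        ⟨Walk.cons hab (Walk.cons hbc Walk.nil), hp2⟩
      have hlen := congrArg (fun p : T.Path a cc => p.1.length) this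
      simp [SimpleGraph.Path.singleton] at hlen
  obtain ⟨v, hv⟩ := hcenter
  have hadjv : ∀ y : V, y ≠ v → T.Adj v y := by
    intro y hy
    obtain ⟨w⟩ := hT.isConnected.preconnected y v
    cases w with
    | nil => exact absurd rfl hy
    | @cons _ z _ h q =>
      have hvz : v ∈ s(y, z) := hv _ h
      rw [Sym2.mem_iff] at hvz
      rcases hvz with rfl | rfl
      · exact absurd rfl hy
      · exact h.symm
  refine ⟨v, fun x y => ⟨fun h => ⟨h.ne, ?_⟩, fun ⟨h1, h2⟩ => ?_⟩⟩
  · have := hv s(x, y) h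
    rw [Sym2.mem_iff] at this
    tauto
  · rcases h2 with rfl | rfl
    · exact hadjv y (Ne.symm h1)
    · exact (hadjv x h1).symm

lemma nonstar_coloring {V : Type*} [Fintype V] {G : SimpleGraph V} (hG : G.Connected)
    (hn : 3 ≤ Fintype.card V)
    (hns : ¬ ∃ v : V, ∀ x y : V, G.Adj x y ↔ x ≠ y ∧ (x = v ∨ y = v)) :
    ∃ c : Sym2 V → ℕ, (∀ e ∈ G.edgeSet, c e < Fintype.card V - 2) ∧ IsCFCColoring G c := by
  classical
  obtain ⟨T, hTG, hT⟩ := exists_spanning_tree G hG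
  by_cases hmeet : ∀ e1 ∈ T.edgeSet, ∀ e2 ∈ T.edgeSet, e1 ≠ e2 → ∃ z, z ∈ e1 ∧ z ∈ e2
  · have hex2 : ∃ a b : V, a ≠ b := by
      have h1 : 1 < Fintype.card V := by omega
      obtain ⟨a, b, hab⟩ := Fintype.exists_pair_of_one_lt_card h1
      exact ⟨a, b, hab⟩
    obtain ⟨v, hstar⟩ := tree_star hT hmeet hex2
    push_neg at hns
    obtain ⟨x, y, hcase⟩ := hns v
    rcases hcase with ⟨hA, himp⟩ | ⟨hA, hxy, hor⟩
    · obtain ⟨hxv, hyv⟩ := himp hA.ne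
      have hTxv : T.Adj x v := (hstar x v).2 ⟨hxv, Or.inr rfl⟩
      have hTvy : T.Adj v y := (hstar v y).2 ⟨Ne.symm hyv, Or.inl rfl⟩
      have hne12 : s(x, v) ≠ s(v, y) := by
        intro hcontra
        rw [Sym2.eq_iff] at hcontra
        rcases hcontra with ⟨h1, -⟩ | ⟨h1, -⟩
        · exact hxv h1
        · exact hA.ne h1
      refine tree_pair_coloring hTG hT ((mem_edgeSet T).2 hTxv) ((mem_edgeSet T).2 hTvy) hne12 ?_ hn
      intro a m b hE1 hE2
      rw [Sym2.eq_iff] at hE1 hE2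
      rcases hE1 with ⟨h1a, h1b⟩ | ⟨h1a, h1b⟩ <;> rcases hE2 with ⟨h2a, h2b⟩ | ⟨h2a, h2b⟩
      · rw [← h1a, ← h2b]; exact hA
      · exact absurd (h2b.trans h1b.symm) hyv
      · exact absurd (h1a.trans h2a.symm) hxv
      · exact absurd (h1a.trans h2b.symm) hA.ne
    · exact absurd (hTG ((hstar x y).2 ⟨hxy, hor⟩)) hA
  · push_neg at hmeet
    obtain ⟨e1, h1, e2, h2, hne, hdisj⟩ := hmeet
    refine tree_pair_coloring hTG hT h1 h2 hne ?_ hn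
    intro a x b hE1 hE2
    exact absurd (hE2 ▸ Sym2.mem_mk_left x b) (hdisj x (hE1 ▸ Sym2.mem_mk_right a x))

lemma card_two_star {V : Type*} [Fintype V] {G : SimpleGraph V} (hG : G.Connected)
    (h2 : Fintype.card V = 2) :
    ∃ v : V, ∀ x y : V, G.Adj x y ↔ x ≠ y ∧ (x = v ∨ y = v) := by
  classical
  obtain ⟨v⟩ := hG.nonempty
  have huniq : ∀ a x y : V, x ≠ a → y ≠ a → x = y := by
    intro a x y hx hy
    have hcard : Fintype.card {u : V // u ≠ a} = 1 := by rw [card_ne_eq]; omega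
    have := Fintype.card_le_one_iff.1 (le_of_eq hcard) ⟨x, hx⟩ ⟨y, hy⟩
    exact congrArg Subtype.val this
  have hadj : ∀ x y : V, x ≠ y → G.Adj x y := by
    intro x y hxy
    obtain ⟨w⟩ := hG.preconnected x y
    cases w with
    | nil => exact absurd rfl hxy
    | @cons _ z _ h q =>
      have hzy : z = y := huniq x z y h.ne' (Ne.symm hxy)
      exact hzy ▸ h
  refine ⟨v, fun x y => ⟨fun h => ⟨h.ne, ?_⟩, fun ⟨h1, _⟩ => hadj x y h1⟩⟩
  by_contra hor
  push_neg at hor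
  exact h.ne (huniq v x y hor.1 hor.2)

end Helpers

open SimpleGraph in
/-- For a connected graph on `n ≥ 2` vertices, `cfc(G) = n - 1` iff `G` is the
star `K_{1,n-1}` (some vertex adjacent to all others, and no other edges). -/
theorem cfc_eq_card_sub_one_iff {V : Type*} [Fintype V] (G : SimpleGraph V)
    (hG : G.Connected) (hn : 2 ≤ Fintype.card V) :
    cfcNum G = Fintype.card V - 1 ↔
      ∃ v : V, ∀ x y : V, G.Adj x y ↔ x ≠ y ∧ (x = v ∨ y = v) := by
  classical
  constructor
  · intro hcfc
    by_cases hstar : ∃ v : V, ∀ x y : V, G.Adj x y ↔ x ≠ y ∧ (x = v ∨ y = v)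
    · exact hstar
    · rcases lt_or_ge (Fintype.card V) 3 with h3 | h3
      · exact card_two_star hG (by omega)
      · exfalso
        obtain ⟨c, hb, hc⟩ := nonstar_coloring hG h3 hstar
        have hle : cfcNum G ≤ Fintype.card V - 2 :=
          Nat.sInf_le ⟨c, hb, hc⟩
        rw [hcfc] at hle
        omega
  · rintro ⟨v, hstar⟩
    obtain ⟨c, hb, hc⟩ := star_coloring_exists hstar hn
    apply le_antisymm
    · exact Nat.sInf_le ⟨c, hb, hc⟩
    · refine le_csInf ⟨_, ⟨c, hb, hc⟩⟩ ?_
      rintro k ⟨c2, hb2, hc2⟩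
      exact star_lower hstar hb2 hc2
end

section
/- For every connected graph G, cfc(G) ≤ rank(G), where rank(G) is the edge ranking number of G. -/
/-- `c` is an edge ranking of `G` (with labels from `ℕ`): on every path
containing two distinct edges of the same label, some edge has a larger label. -/
def IsEdgeRanking {V : Type*} (G : SimpleGraph V) (c : Sym2 V → ℕ) : Prop :=
  ∀ ⦃u v : V⦄ (p : G.Walk u v), p.IsPath →
    ∀ e₁ ∈ p.edges, ∀ e₂ ∈ p.edges, e₁ ≠ e₂ → c e₁ = c e₂ →
      ∃ e₃ ∈ p.edges, c e₁ < c e₃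

/-- The edge ranking number: least `k` such that the edges can be labeled
with labels `1, …, k` forming an edge ranking. -/
noncomputable def erank {V : Type*} [Fintype V] (G : SimpleGraph V) : ℕ :=
  sInf {k | ∃ c : Sym2 V → ℕ, (∀ e ∈ G.edgeSet, 1 ≤ c e ∧ c e ≤ k) ∧ IsEdgeRanking G c}

private lemma length_eq_one_of_nodup {α : Type*} {l : List α} (hn : l.Nodup) {a : α}
    (ha : a ∈ l) (h : ∀ x ∈ l, x = a) : l.length = 1 := by
  cases l with
  | nil => simp at ha
  | cons x t =>
    have hx : x = a := h x List.mem_cons_self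
    have ht : t = [] := by
      apply List.eq_nil_iff_forall_not_mem.mpr
      intro y hy
      have : y = a := h y (List.mem_cons_of_mem _ hy)
      exact (List.nodup_cons.mp hn).1 (by rw [hx, ← this] at *; exact hy)
    simp [ht]

/-- For every connected graph `G`, `cfc(G) ≤ rank(G)`. -/
theorem cfc_le_erank {V : Type*} [Fintype V] (G : SimpleGraph V) (hG : G.Connected) :
    cfcNum G ≤ erank G := by
  classical
  -- the erank set is nonempty
  have hne : {k | ∃ c : Sym2 V → ℕ, (∀ e ∈ G.edgeSet, 1 ≤ c e ∧ c e ≤ k) ∧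
      IsEdgeRanking G c}.Nonempty := by
    obtain ⟨n, ⟨f⟩⟩ : ∃ n, Nonempty (Sym2 V ≃ Fin n) := ⟨_, ⟨Fintype.equivFin (Sym2 V)⟩⟩
    refine ⟨n, fun e => (f e : ℕ) + 1, fun e _ => ⟨Nat.le_add_left _ _, (f e).2⟩, ?_⟩
    intro u v p hp e₁ h₁ e₂ h₂ hne hc
    have hc' : (f e₁ : ℕ) = f e₂ := by simpa using hc
    exact absurd (f.injective (Fin.ext hc')) hne
  apply le_csInf hne
  rintro k ⟨c, hbound, hrank⟩
  apply Nat.sInf_le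
  refine ⟨fun e => c e - 1, fun e he => ?_, ?_⟩
  · have := hbound e he; show c e - 1 < k; omega
  · intro u v huv
    obtain ⟨w⟩ := hG u v
    set p := w.toPath.val with hpdef
    have hp : p.IsPath := w.toPath.2
    refine ⟨p, hp, ?_⟩
    -- p has at least one edge
    have hlen : p.edges ≠ [] := by
      intro h
      have : p.length = 0 := by
        have := p.length_edges; rw [h] at this; simpa using this.symm
      exact huv (SimpleGraph.Walk.eq_of_length_eq_zero this)
    obtain ⟨m, hm⟩ : ∃ m, (p.edges.map c).maximum = some m := by
      cases h : (p.edges.map c).maximum with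
      | bot => exact absurd (List.maximum_eq_bot.mp h) (by simpa using hlen)
      | coe m => exact ⟨m, rfl⟩
    have hmmem : m ∈ p.edges.map c := List.maximum_mem hm
    obtain ⟨e₀, he₀, hce₀⟩ := List.mem_map.mp hmmem
    have hmax : ∀ e ∈ p.edges, c e ≤ m := fun e he =>
      List.le_maximum_of_mem (List.mem_map_of_mem (f := c) he) hm
    have hedge : ∀ e ∈ p.edges, 1 ≤ c e := fun e he =>
      (hbound e (p.edges_subset_edgeSet he)).1
    refine ⟨m - 1, ?_⟩
    have hfiltmem : ∀ x, x ∈ p.edges.filter (fun e => c e - 1 = m - 1) ↔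
        x ∈ p.edges ∧ c x = m := by
      intro x
      rw [List.mem_filter]
      constructor
      · rintro ⟨hx, hx2⟩
        simp only [decide_eq_true_eq] at hx2
        have := hedge x hx
        have := hedge e₀ he₀
        exact ⟨hx, by omega⟩
      · rintro ⟨hx, hx2⟩
        exact ⟨hx, by simp [hx2]⟩
    apply length_eq_one_of_nodup (l := p.edges.filter _)
      (hp.edges_nodup.filter _) ((hfiltmem e₀).mpr ⟨he₀, hce₀⟩)
    intro x hx
    obtain ⟨hxmem, hxc⟩ := (hfiltmem x).mp hx
    by_contra hxne
    obtain ⟨e₃, he₃, hlt⟩ := hrank p hp x hxmem e₀ he₀ hxne (by rw [hxc, hce₀])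
    exact absurd (hmax e₃ he₃) (by omega)
end

section
/- Let S_{a,b} be the double star: the tree with exactly two non-leaf vertices, adjacent to each other, of degrees a and b respectively (a, b ≥ 2). Then cfc(S_{a,b}) = max{a, b}. -/
open SimpleGraph

open SimpleGraph

section Aux

lemma filter_pair_length {α : Type*} (c : α → ℕ) (e1 e2 : α) :
    (∃ col, ([e1, e2].filter (fun e => c e = col)).length = 1) ↔ c e1 ≠ c e2 := by
  constructor
  · rintro ⟨col, hcol⟩ h
    by_cases h1 : c e1 = col <;> simp [List.filter, h1, h ▸ h1, h] at hcol
  · intro h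
    exact ⟨c e1, by simp [List.filter, h.symm]⟩

lemma filter_triple_length {α : Type*} (c : α → ℕ) (e1 e2 e3 : α)
    (h12 : c e1 ≠ c e2) (h32 : c e3 ≠ c e2) :
    ∃ col, ([e1, e2, e3].filter (fun e => c e = col)).length = 1 := by
  by_cases h13 : c e1 = c e3
  · exact ⟨c e2, by simp [List.filter, h12.symm, h32.symm, h13 ▸ h12, h12]⟩
  · exact ⟨c e1, by simp [List.filter, Ne.symm h12, Ne.symm h13, h12]⟩

lemma no_escape_pair {V : Type*} (G : SimpleGraph V) (x w : V)
    (hNx : ∀ y, G.Adj x y → y = w) (hNw : ∀ y, G.Adj w y → y = x) :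
    ∀ (t z : V) (p : G.Walk z t), z = x ∨ z = w → t = x ∨ t = w := by
  intro t z p
  induction p with
  | nil => exact id
  | cons h q ih =>
    rintro (rfl | rfl)
    · exact ih (Or.inr (hNx _ h))
    · exact ih (Or.inl (hNw _ h))

lemma leaf_unique_nbr {V : Type*} [Fintype V] (G : SimpleGraph V) [DecidableRel G.Adj]
    {z : V} (hd : G.degree z = 1) {y y' : V} (hy : G.Adj z y) (hy' : G.Adj z y') : y = y' := by
  by_contra hne
  have : 1 < (G.neighborFinset z).card :=
    Finset.one_lt_card.mpr ⟨y, by simpa using hy, y', by simpa using hy', hne⟩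
  rw [card_neighborFinset_eq_degree, hd] at this; omega

lemma adj_u_or_adj_v {V : Type*} [Fintype V] (G : SimpleGraph V) [DecidableRel G.Adj]
    (hconn : G.Connected) (u v : V) (huv : G.Adj u v)
    (hleaf : ∀ x : V, x ≠ u → x ≠ v → G.degree x = 1) :
    ∀ x : V, G.Adj u x ∨ G.Adj v x := by
  intro x
  by_cases hxu : x = u
  · exact Or.inr (hxu ▸ huv.symm)
  by_cases hxv : x = v
  · exact Or.inl (hxv ▸ huv)
  have hdx : G.degree x = 1 := hleaf x hxu hxv
  obtain ⟨w, hw⟩ : ∃ w, G.Adj x w := by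
    have : 0 < G.degree x := by omega
    exact G.degree_pos_iff_exists_adj x |>.mp this
  by_cases hwu : w = u
  · exact Or.inl (hwu ▸ hw).symm
  by_cases hwv : w = v
  · exact Or.inr (hwv ▸ hw).symm
  exfalso
  obtain ⟨p⟩ := hconn.preconnected x u
  rcases no_escape_pair G x w
    (fun y hy => leaf_unique_nbr G hdx hy hw)
    (fun y hy => leaf_unique_nbr G (hleaf w hwu hwv) hy hw.symm)
    u x p (Or.inl rfl) with h | h
  · exact hxu h.symm
  · exact hwu h.symm

end Aux


lemma degree_le_of_cfc {V : Type*} [Fintype V] (G : SimpleGraph V) [DecidableRel G.Adj]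
    (hG : G.IsTree) (u : V) (c : Sym2 V → ℕ) (k : ℕ)
    (hck : ∀ e ∈ G.edgeSet, c e < k) (hcfc : IsCFCColoring G c) :
    G.degree u ≤ k := by
  rw [← card_neighborFinset_eq_degree]
  have : k = (Finset.range k).card := by simp
  rw [this]
  apply Finset.card_le_card_of_injOn (fun x => c s(u, x))
  · intro x hx
    simp only [Finset.mem_coe, Finset.mem_range]
    exact hck _ ((G.mem_edgeSet).mpr (by simpa using hx))
  · intro x hx y hy hcxy
    simp only [Finset.coe_sort_coe, Finset.mem_coe, mem_neighborFinset] at hx hy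
    by_contra hxyne
    obtain ⟨p, hp, col, hcol⟩ := hcfc x y hxyne
    have hq : (SimpleGraph.Walk.cons hx.symm (SimpleGraph.Walk.cons hy .nil)).IsPath := by
      simp [Walk.isPath_def, hx.ne', hy.ne, hxyne]
    have hpq : p = SimpleGraph.Walk.cons hx.symm (SimpleGraph.Walk.cons hy .nil) :=
      (hG.existsUnique_path x y).unique hp hq
    rw [hpq] at hcol
    have : c s(x, u) ≠ c s(u, y) := (filter_pair_length c _ _).mp ⟨col, by simpa using hcol⟩
    rw [Sym2.eq_swap] at this
    exact this hcxy

/-- The double star `S_{a,b}` (a tree with two adjacent vertices of degrees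
`a, b ≥ 2`, all other vertices being leaves) has `cfc = max a b`. -/
theorem cfc_doubleStar {V : Type*} [Fintype V] (G : SimpleGraph V)
    [DecidableRel G.Adj] (hG : G.IsTree) (a b : ℕ) (ha : 2 ≤ a) (hb : 2 ≤ b)
    (u v : V) (huv : G.Adj u v) (hu : G.degree u = a) (hv : G.degree v = b)
    (hleaf : ∀ x : V, x ≠ u → x ≠ v → G.degree x = 1) :
    cfcNum G = max a b := by
  classical
  have huvne : u ≠ v := huv.ne
  have hcov : ∀ x : V, G.Adj u x ∨ G.Adj v x :=
    adj_u_or_adj_v G hG.isConnected u v huv hleaf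
  set M := max a b with hM
  have hvNu : v ∈ G.neighborFinset u := by simpa using huv
  have huNv : u ∈ G.neighborFinset v := by simpa using huv.symm
  obtain ⟨f, hfa, hfinj⟩ :
      ∃ f : V → ℕ, (∀ x ∈ G.neighborFinset u, f x < a) ∧
        (∀ x ∈ G.neighborFinset u, ∀ y ∈ G.neighborFinset u, f x = f y → x = y) := by
    obtain ⟨eu⟩ : Nonempty ((G.neighborFinset u) ≃ Fin a) :=
      ⟨Finset.equivFinOfCardEq (by rw [card_neighborFinset_eq_degree]; exact hu)⟩
    refine ⟨fun x => if h : x ∈ G.neighborFinset u then (eu ⟨x, h⟩ : ℕ) else 0, ?_, ?_⟩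
    · intro x hx
      simp only [dif_pos hx]
      exact (eu ⟨x, hx⟩).isLt
    · intro x hx y hy hxy
      simp only [dif_pos hx, dif_pos hy] at hxy
      exact Subtype.mk_eq_mk.mp (eu.injective (Fin.val_injective hxy))
  have hfvM : f v < M := lt_of_lt_of_le (hfa v hvNu) (le_max_left a b)
  obtain ⟨g, hgM, hgu, hginj⟩ :
      ∃ g : V → ℕ, (∀ y ∈ G.neighborFinset v, g y < M) ∧ g u = f v ∧
        (∀ x ∈ G.neighborFinset v, ∀ y ∈ G.neighborFinset v, g x = g y → x = y) := by
    obtain ⟨ev⟩ : Nonempty ((G.neighborFinset v) ≃ Fin b) :=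
      ⟨Finset.equivFinOfCardEq (by rw [card_neighborFinset_eq_degree]; exact hv)⟩
    set j : ℕ := (ev ⟨u, huNv⟩ : ℕ) with hj
    have hjM : j < M := lt_of_lt_of_le (ev ⟨u, huNv⟩).isLt (le_max_right a b)
    refine ⟨fun y => if h : y ∈ G.neighborFinset v then Equiv.swap j (f v) (ev ⟨y, h⟩ : ℕ)
      else 0, ?_, ?_, ?_⟩
    · intro y hy
      simp only [dif_pos hy]
      rw [Equiv.swap_apply_def]
      have : ((ev ⟨y, hy⟩ : Fin b) : ℕ) < M :=
        lt_of_lt_of_le (ev ⟨y, hy⟩).isLt (le_max_right a b)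
      split_ifs <;> omega
    · simp only [dif_pos huNv, ← hj, Equiv.swap_apply_left]
    · intro x hx y hy hxy
      simp only [dif_pos hx, dif_pos hy] at hxy
      have h2 := (Equiv.swap j (f v)).injective hxy
      exact Subtype.mk_eq_mk.mp (ev.injective (Fin.val_injective h2))
  obtain ⟨c, hcu, hcvv⟩ :
      ∃ c : Sym2 V → ℕ, (∀ x : V, c s(u, x) = f x) ∧ (∀ y : V, y ≠ u → c s(v, y) = g y) := by
    refine ⟨Sym2.lift ⟨fun x y =>
      if x = u then f y else if y = u then f x else if x = v then g y else if y = v then g x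
      else 0, ?_⟩, ?_, ?_⟩
    · intro x y
      dsimp only
      split_ifs <;> subst_vars <;> simp_all
    · intro x
      rw [Sym2.lift_mk]
      simp
    · intro y hyu
      rw [Sym2.lift_mk]
      simp [Ne.symm huvne, hyu]
  have hcv : ∀ y ∈ G.neighborFinset v, c s(v, y) = g y := by
    intro y hy
    by_cases hyu : y = u
    · subst hyu
      rw [Sym2.eq_swap, hcu v]
      exact hgu.symm
    · exact hcvv y hyu
  -- colors are < M on edges
  have hbound : ∀ e ∈ G.edgeSet, c e < M := by
    intro e he
    induction e with
    | _ x y =>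
      rw [mem_edgeSet] at he
      by_cases hxu : x = u
      · subst hxu
        rw [hcu]
        exact lt_of_lt_of_le (hfa y (by simpa using he)) (le_max_left a b)
      by_cases hyu : y = u
      · subst hyu
        rw [Sym2.eq_swap, hcu]
        exact lt_of_lt_of_le (hfa x (by simpa using he.symm)) (le_max_left a b)
      by_cases hxv : x = v
      · subst hxv
        rw [hcv y (by simpa using he)]
        exact hgM y (by simpa using he)
      by_cases hyv : y = v
      · subst hyv
        rw [Sym2.eq_swap, hcv x (by simpa using he.symm)]
        exact hgM x (by simpa using he.symm)
      -- impossible: an edge between two leaves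
      exfalso
      rcases hcov x with hx | hx
      · exact hyu (leaf_unique_nbr G (hleaf x hxu hxv) he hx.symm)
      · exact hyv (leaf_unique_nbr G (hleaf x hxu hxv) he hx.symm)
  -- c is a CFC coloring
  have hcfc : IsCFCColoring G c := by
    intro x y hxy
    by_cases hadj : G.Adj x y
    · exact ⟨Walk.cons hadj .nil, by simp [Walk.isPath_def, hxy],
        ⟨c s(x, y), by simp⟩⟩
    rcases hcov x with hx | hx <;> rcases hcov y with hy | hy
    · -- both adjacent to u
      refine ⟨Walk.cons hx.symm (Walk.cons hy .nil),
        by simp [Walk.isPath_def, hx.ne', hy.ne, hxy], ?_⟩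
      simp only [Walk.edges_cons, Walk.edges_nil]
      apply (filter_pair_length c _ _).mpr
      rw [Sym2.eq_swap, hcu, hcu]
      intro hfe
      exact hxy (hfinj x (by simpa using hx) y (by simpa using hy) hfe)
    · -- x adj u, y adj v
      have hxv : x ≠ v := fun h => hadj (h ▸ hy)
      have hyu : y ≠ u := fun h => hadj (h ▸ hx).symm
      refine ⟨Walk.cons hx.symm (Walk.cons huv (Walk.cons hy .nil)),
        by simp [Walk.isPath_def, hx.ne', hxv, hxy, huvne, Ne.symm hyu, hy.ne], ?_⟩
      simp only [Walk.edges_cons, Walk.edges_nil]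
      have e1 : c s(x, u) = f x := by rw [Sym2.eq_swap, hcu]
      have e2 : c s(u, v) = f v := hcu v
      have e3 : c s(v, y) = g y := hcv y (by simpa using hy)
      refine filter_triple_length c _ _ _ ?_ ?_
      · rw [e1, e2]
        intro hfe
        exact hxv (hfinj x (by simpa using hx) v hvNu hfe)
      · rw [e3, e2, ← hgu]
        intro hfe
        exact hyu (hginj y (by simpa using hy) u huNv hfe)
    · -- x adj v, y adj u
      have hxu : x ≠ u := fun h => hadj (h ▸ hy)
      have hyv : y ≠ v := fun h => hadj (h ▸ hx).symm
      refine ⟨Walk.cons hx.symm (Walk.cons huv.symm (Walk.cons hy .nil)),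
        by simp [Walk.isPath_def, hx.ne', hxu, hxy, Ne.symm huvne, Ne.symm hyv, hy.ne], ?_⟩
      simp only [Walk.edges_cons, Walk.edges_nil]
      have e1 : c s(x, v) = g x := by rw [Sym2.eq_swap]; exact hcv x (by simpa using hx)
      have e2 : c s(v, u) = f v := by rw [Sym2.eq_swap]; exact hcu v
      have e3 : c s(u, y) = f y := hcu y
      refine filter_triple_length c _ _ _ ?_ ?_
      · rw [e1, e2, ← hgu]
        intro hfe
        exact hxu (hginj x (by simpa using hx) u huNv hfe)
      · rw [e3, e2]
        intro hfe
        exact hyv (hfinj y (by simpa using hy) v hvNu hfe)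
    · -- both adjacent to v
      refine ⟨Walk.cons hx.symm (Walk.cons hy .nil),
        by simp [Walk.isPath_def, hx.ne', hy.ne, hxy], ?_⟩
      simp only [Walk.edges_cons, Walk.edges_nil]
      apply (filter_pair_length c _ _).mpr
      rw [Sym2.eq_swap, hcv x (by simpa using hx), hcv y (by simpa using hy)]
      intro hfe
      exact hxy (hginj x (by simpa using hx) y (by simpa using hy) hfe)
  have hMem : M ∈ {k | ∃ c : Sym2 V → ℕ, (∀ e ∈ G.edgeSet, c e < k) ∧ IsCFCColoring G c} :=
    ⟨c, hbound, hcfc⟩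
  apply le_antisymm
  · exact Nat.sInf_le hMem
  · apply le_csInf ⟨M, hMem⟩
    rintro k ⟨c', hc', hcfc'⟩
    have h1 : a ≤ k := hu ▸ degree_le_of_cfc G hG u c' k hc' hcfc'
    have h2 : b ≤ k := hv ▸ degree_le_of_cfc G hG v c' k hc' hcfc'
    exact max_le h1 h2
end

section
/- For any tree T of order n, the odd connection number satisfies oc(T) ≥ ⌈log₂ n⌉. -/
/-- `c` is an odd connection coloring of `G`. -/
def IsOCColoring {V : Type*} (G : SimpleGraph V) (c : Sym2 V → ℕ) : Prop :=
  ∀ u v : V, u ≠ v → ∃ p : G.Walk u v, p.IsPath ∧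
    ∃ col : ℕ, Odd (p.edges.filter (fun e => c e = col)).length

/-- The odd connection number of `G`. -/
noncomputable def ocNum {V : Type*} [Fintype V] (G : SimpleGraph V) : ℕ :=
  sInf {k | ∃ c : Sym2 V → ℕ, (∀ e ∈ G.edgeSet, c e < k) ∧ IsOCColoring G c}

open SimpleGraph Walk

namespace OCAux

variable {V : Type*} {T : SimpleGraph V}

noncomputable def thePath (hT : T.IsTree) (u v : V) : T.Walk u v :=
  (hT.existsUnique_path u v).exists.choose

lemma thePath_isPath (hT : T.IsTree) (u v : V) : (thePath hT u v).IsPath :=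
  (hT.existsUnique_path u v).exists.choose_spec

lemma path_eq (hT : T.IsTree) {u v : V} (p : T.Walk u v) (hp : p.IsPath) :
    p = thePath hT u v :=
  (hT.existsUnique_path u v).unique hp (thePath_isPath hT u v)

lemma countP_parity (hT : T.IsTree) (q : Sym2 V → Bool) :
    ∀ {u v : V} (w : T.Walk u v),
      w.edges.countP q % 2 = (thePath hT u v).edges.countP q % 2 := by
  intro u v w
  classical
  induction w with
  | nil =>
    rw [← path_eq hT Walk.nil (by simp)]
  | @cons u x v h t ih =>
    by_cases hu : u ∈ (thePath hT x v).support
    · set P := thePath hT x v with hP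
      have e1 : t.edges.countP q % 2 =
          ((P.takeUntil u hu).edges.countP q + (P.dropUntil u hu).edges.countP q) % 2 := by
        rw [ih]
        conv_lhs => rw [← take_spec P hu]
        rw [Walk.edges_append, List.countP_append]
      have htake : (P.takeUntil u hu).IsPath := (thePath_isPath hT x v).takeUntil hu
      have hdrop : P.dropUntil u hu = thePath hT u v :=
        path_eq hT _ ((thePath_isPath hT x v).dropUntil hu)
      have h2 : Walk.cons h Walk.nil = thePath hT u x :=
        path_eq hT _ (by simp [h.ne])
      have h1 : P.takeUntil u hu = (Walk.cons h Walk.nil).reverse := by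
        have h3 := path_eq hT (P.takeUntil u hu).reverse htake.reverse
        rw [← Walk.reverse_reverse (P.takeUntil u hu), h3, ← h2]
      have e2 : (P.takeUntil u hu).edges = [s(u, x)] := by
        rw [h1]; simp [Walk.edges_reverse]
      rw [e2] at e1
      simp only [Walk.edges_cons, List.countP_cons] at e1 ⊢
      rw [hdrop] at e1
      simp only [List.countP_nil] at e1
      omega
    · have hpath : (Walk.cons h (thePath hT x v)) = thePath hT u v :=
        path_eq hT _ ((thePath_isPath hT x v).cons hu)
      rw [← hpath]
      simp only [Walk.edges_cons, List.countP_cons]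
      omega

end OCAux

open OCAux in
/-- For a tree `T` of order `n`, `oc(T) ≥ ⌈log₂ n⌉`. -/
theorem clog_le_oc {V : Type*} [Fintype V] (T : SimpleGraph V) (hT : T.IsTree) :
    Nat.clog 2 (Fintype.card V) ≤ ocNum T := by
  classical
  -- the defining set is nonempty
  have hne : {k | ∃ c : Sym2 V → ℕ, (∀ e ∈ T.edgeSet, c e < k) ∧ IsOCColoring T c}.Nonempty := by
    refine ⟨Fintype.card (Sym2 V), fun e => (Fintype.equivFin (Sym2 V) e : ℕ), fun e _ => ?_, ?_⟩
    · exact (Fintype.equivFin (Sym2 V) e).2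
    · intro u v huv
      obtain ⟨w⟩ := hT.isConnected u v
      refine ⟨w.toPath, w.toPath.2, ?_⟩
      have hnil : (w.toPath : T.Walk u v).edges ≠ [] := by
        intro hq
        have : (w.toPath : T.Walk u v).Nil := by
          rw [Walk.nil_iff_length_eq, ← Walk.length_edges, hq, List.length_nil]
        exact huv (Walk.Nil.eq this)
      obtain ⟨e0, he0⟩ := List.exists_mem_of_ne_nil _ hnil
      refine ⟨(Fintype.equivFin (Sym2 V) e0 : ℕ), ?_⟩
      have hfc : (w.toPath : T.Walk u v).edges.filter
          (fun e => decide ((Fintype.equivFin (Sym2 V) e : ℕ) = (Fintype.equivFin (Sym2 V) e0 : ℕ)))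
          = (w.toPath : T.Walk u v).edges.filter (fun e => e == e0) := by
        refine List.filter_congr fun a _ => ?_
        simp [Fin.val_eq_val, (Fintype.equivFin (Sym2 V)).injective.eq_iff, beq_eq_decide]
      rw [hfc, ← List.countP_eq_length_filter]
      have : (w.toPath : T.Walk u v).edges.count e0 = 1 :=
        List.count_eq_one_of_mem w.toPath.2.edges_nodup he0
      rw [List.count] at this
      rw [this]
      exact odd_one
  refine le_csInf hne ?_
  rintro k ⟨c, hc, hoc⟩
  rcases le_or_gt (Fintype.card V) 1 with hcard | hcard
  · exact le_trans ((Nat.clog_le_iff_le_pow one_lt_two).mpr (by simpa using hcard)) (Nat.zero_le _)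
  have hnev : Nonempty V := Fintype.card_pos_iff.mp (by omega)
  obtain ⟨r⟩ := hnev
  set σ : V → (Fin k → ZMod 2) :=
    fun v i => ((thePath hT r v).edges.countP (fun e => decide (c e = (i : ℕ))) : ZMod 2) with hσ
  have hinj : Function.Injective σ := by
    intro a b hab
    by_contra hne'
    obtain ⟨p, hp, col, hodd⟩ := hoc a b hne'
    rw [← List.countP_eq_length_filter] at hodd
    have hcol : col < k := by
      have hne0 : p.edges.filter (fun e => decide (c e = col)) ≠ [] := by
        intro h0
        rw [List.countP_eq_length_filter, h0] at hodd
        simp [Nat.odd_iff] at hodd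
      obtain ⟨e, he⟩ := List.exists_mem_of_ne_nil _ hne0
      obtain ⟨he1, he2⟩ := List.mem_filter.mp he
      have : c e = col := by simpa using he2
      exact this ▸ hc e (p.edges_subset_edgeSet he1)
    have hpeq : p = thePath hT a b := path_eq hT p hp
    have hw := countP_parity hT (fun e => decide (c e = col))
      ((thePath hT r a).reverse.append (thePath hT r b))
    rw [Walk.edges_append, Walk.edges_reverse, List.countP_append, List.countP_reverse] at hw
    have hab' : σ a ⟨col, hcol⟩ = σ b ⟨col, hcol⟩ := congrFun hab _
    simp only [hσ] at hab'
    rw [ZMod.natCast_eq_natCast_iff'] at hab'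
    rw [hpeq, Nat.odd_iff] at hodd
    omega
  have hcard2 : Fintype.card V ≤ 2 ^ k := by
    calc Fintype.card V ≤ Fintype.card (Fin k → ZMod 2) := Fintype.card_le_of_injective σ hinj
    _ = 2 ^ k := by simp [Fintype.card_fun]
  exact (Nat.clog_le_iff_le_pow one_lt_two).mpr hcard2
end

section
/- For any tree T of order n, cfc(T) ≥ ⌈log₂ n⌉. Consequently, among all trees of order n the path P_n minimizes cfc. -/
open SimpleGraph

/-- A nodup list whose elements satisfying `p` are exactly one element has a
filter of length one. -/
lemma aux_filter_length_one {α : Type*} {l : List α} {p : α → Bool} (hnd : l.Nodup) {a : α}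
    (ha : a ∈ l) (hpa : p a) (huniq : ∀ x ∈ l, p x → x = a) : (l.filter p).length = 1 := by
  have hmem : a ∈ l.filter p := List.mem_filter.mpr ⟨ha, hpa⟩
  have hsub : ∀ x ∈ l.filter p, x = a := fun x hx =>
    huniq x (List.mem_filter.mp hx).1 (List.mem_filter.mp hx).2
  have hnd2 : (l.filter p).Nodup := hnd.filter _
  rcases hfl : l.filter p with _ | ⟨x, _ | ⟨y, t⟩⟩
  · rw [hfl] at hmem; simp at hmem
  · rfl
  · rw [hfl] at hsub hnd2
    have hx := hsub x (by simp)
    have hy := hsub y (by simp)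
    subst hx
    rw [hy] at hnd2
    simp at hnd2

section Lower

variable {V : Type*}

open Classical in
/-- Which side of the (bridge) edge `e` the vertex `v` lies on. -/
noncomputable def sideFn (T : SimpleGraph V) (e : Sym2 V) (v : V) : ZMod 2 :=
  if (T \ SimpleGraph.fromEdgeSet {e}).Reachable e.out.1 v then 0 else 1

lemma sideFn_self {T : SimpleGraph V} (hT : T.IsAcyclic) {e : Sym2 V} (he : e ∈ T.edgeSet)
    {x y : V} (hcase : s(x, y) = e) :
    sideFn T e x + sideFn T e y = 1 := by
  classical
  have hE : s(e.out.1, e.out.2) = e := by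
    show Quot.mk _ (e.out.1, e.out.2) = e
    rw [Prod.mk.eta]; exact e.out_eq
  set a := e.out.1 with ha
  set b := e.out.2 with hb
  have hbr0 : T.IsBridge e := isAcyclic_iff_forall_edge_isBridge.mp hT he
  rw [← hE] at hbr0
  have hbr : ¬ (T \ SimpleGraph.fromEdgeSet {s(a, b)}).Reachable a b :=
    (isBridge_iff.mp hbr0)
  rw [hE] at hbr
  have hσa : sideFn T e a = 0 := by
    unfold sideFn; exact if_pos (Reachable.refl a)
  have hσb : sideFn T e b = 1 := by
    unfold sideFn; exact if_neg hbr
  rw [← hE, Sym2.eq_iff] at hcase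
  rcases hcase with ⟨rfl, rfl⟩ | ⟨rfl, rfl⟩
  · rw [hσa, hσb]; ring
  · rw [hσa, hσb]; ring

lemma sideFn_other {T : SimpleGraph V} {e : Sym2 V}
    {x y : V} (hxy : T.Adj x y) (hcase : s(x, y) ≠ e) :
    sideFn T e x + sideFn T e y = 0 := by
  classical
  have hadj' : (T \ SimpleGraph.fromEdgeSet {e}).Adj x y := by
    rw [sdiff_adj]
    refine ⟨hxy, ?_⟩
    rw [fromEdgeSet_adj]
    rintro ⟨hmem, -⟩
    exact hcase (by simpa using hmem)
  have hiff : (T \ SimpleGraph.fromEdgeSet {e}).Reachable e.out.1 x ↔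
      (T \ SimpleGraph.fromEdgeSet {e}).Reachable e.out.1 y :=
    ⟨fun h => h.trans hadj'.reachable, fun h => h.trans hadj'.symm.reachable⟩
  unfold sideFn
  rw [if_congr hiff rfl rfl]
  exact CharTwo.add_self_eq_zero _

/-- The parity of the number of edges of color `col` on any walk from a fixed
root to `v`. -/
noncomputable def colorSum [Fintype V] (T : SimpleGraph V) (c : Sym2 V → ℕ) (col : ℕ) (v : V) :
    ZMod 2 :=
  ∑ e ∈ (Set.toFinite T.edgeSet).toFinset.filter (fun e => c e = col), sideFn T e v

lemma walk_colorSum [Fintype V] {T : SimpleGraph V} (hT : T.IsAcyclic) (c : Sym2 V → ℕ)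
    (col : ℕ) {u v : V} (w : T.Walk u v) :
    ((w.edges.countP (fun e => c e = col) : ℕ) : ZMod 2)
      = colorSum T c col u + colorSum T c col v := by
  classical
  have key : ∀ x y : V, T.Adj x y →
      colorSum T c col x + colorSum T c col y = (if c s(x, y) = col then 1 else 0 : ZMod 2) := by
    intro x y hxy
    unfold colorSum
    rw [← Finset.sum_add_distrib]
    rw [Finset.sum_congr rfl (fun e hef => show sideFn T e x + sideFn T e y
        = if e = s(x, y) then (1 : ZMod 2) else 0 from by
      have he : e ∈ T.edgeSet := by
        have := (Finset.mem_filter.mp hef).1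
        simpa using this
      by_cases hc : e = s(x, y)
      · rw [if_pos hc]; exact sideFn_self hT he hc.symm
      · rw [if_neg hc]; exact sideFn_other hxy (fun h => hc h.symm))]
    rw [Finset.sum_ite_eq' _ s(x, y) (fun _ => (1 : ZMod 2))]
    by_cases hcol : c s(x, y) = col
    · rw [if_pos hcol, if_pos]
      simp only [Finset.mem_filter, Set.Finite.mem_toFinset, SimpleGraph.mem_edgeSet]
      exact ⟨hxy, hcol⟩
    · rw [if_neg hcol, if_neg]
      simp [Finset.mem_filter, hcol]
  induction w with
  | nil =>
    simp only [Walk.edges_nil, List.countP_nil, Nat.cast_zero]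
    unfold colorSum
    rw [← Finset.sum_add_distrib]
    exact (Finset.sum_eq_zero (fun e _ => CharTwo.add_self_eq_zero _)).symm
  | @cons x y z hxy p ih =>
    rw [Walk.edges_cons, List.countP_cons]
    push_cast
    rw [ih]
    simp only [decide_eq_true_eq]
    rw [(key x y hxy).symm]
    linear_combination CharTwo.add_self_eq_zero (colorSum T c col y)

lemma card_le_two_pow {V : Type*} [Fintype V] {T : SimpleGraph V} (hT : T.IsTree) {k : ℕ}
    {c : Sym2 V → ℕ} (hc : ∀ e ∈ T.edgeSet, c e < k) (hcfc : IsCFCColoring T c) :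
    Fintype.card V ≤ 2 ^ k := by
  classical
  have hinj : Function.Injective (fun v (j : Fin k) => colorSum T c j.val v) := by
    intro u v huv
    by_contra hne
    obtain ⟨p, hp, col, hlen⟩ := hcfc u v hne
    have h1 : (p.edges.countP (fun e => c e = col)) = 1 := by
      rw [List.countP_eq_length_filter]; exact hlen
    have h2 := walk_colorSum hT.IsAcyclic c col p
    rw [h1] at h2
    have heq : colorSum T c col u = colorSum T c col v := by
      by_cases hcol : col < k
      · exact congrFun huv ⟨col, hcol⟩
      · have hzero : ∀ w, colorSum T c col w = 0 := fun w => by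
          unfold colorSum
          rw [Finset.filter_false_of_mem, Finset.sum_empty]
          intro e hee
          have := hc e (by simpa using hee)
          omega
        rw [hzero, hzero]
    rw [heq, CharTwo.add_self_eq_zero] at h2
    simp at h2
  calc Fintype.card V ≤ Fintype.card (Fin k → ZMod 2) := Fintype.card_le_of_injective _ hinj
  _ = 2 ^ k := by simp

lemma exists_cfc {V : Type*} [Fintype V] {T : SimpleGraph V} (hT : T.IsTree) :
    ∃ k, ∃ c : Sym2 V → ℕ, (∀ e ∈ T.edgeSet, c e < k) ∧ IsCFCColoring T c := by
  classical
  refine ⟨Fintype.card (Sym2 V), fun e => (Fintype.equivFin (Sym2 V) e).val,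
    fun e _ => (Fintype.equivFin (Sym2 V) e).isLt, ?_⟩
  intro u v huv
  obtain ⟨w⟩ := hT.isConnected.preconnected u v
  refine ⟨w.toPath.val, w.toPath.prop, ?_⟩
  have hlen : (w.toPath.val).edges ≠ [] := by
    intro hnil
    have hl : (w.toPath.val).length = 0 := by
      have := congrArg List.length hnil
      simpa [Walk.length_edges] using this
    exact huv (Walk.eq_of_length_eq_zero hl)
  obtain ⟨e₀, rest, hE⟩ := List.exists_cons_of_ne_nil hlen
  refine ⟨(Fintype.equivFin (Sym2 V) e₀).val, ?_⟩
  apply aux_filter_length_one (w.toPath.prop.edges_nodup) (a := e₀)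
  · rw [hE]; exact List.mem_cons_self
  · simp
  · intro e _ hpe
    simp only [decide_eq_true_eq] at hpe
    exact (Fintype.equivFin (Sym2 V)).injective (Fin.ext hpe)

end Lower

section Upper

/-- The ruler-sequence coloring of the path graph: the edge `{i, i+1}` gets the
2-adic valuation of `i + 1`. -/
def pathColor (n : ℕ) : Sym2 (Fin n) → ℕ :=
  Sym2.lift ⟨fun x y => (Nat.factorization (max x.val y.val)) 2, fun x y => by
    simp [max_comm]⟩

/-- The walk from `a` to `a + d` in the path graph. -/
def pathWalk (n a : ℕ) (ha : a < n) : (d : ℕ) → (h : a + d < n) →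
    (pathGraph n).Walk ⟨a, ha⟩ ⟨a + d, h⟩
  | 0, _ => Walk.nil
  | d + 1, h => (pathWalk n a ha d (by omega)).concat (by
      rw [pathGraph_adj]; left; rfl)

lemma pathWalk_support (n a : ℕ) (ha : a < n) (d : ℕ) (h : a + d < n) :
    (pathWalk n a ha d h).support.map Fin.val = List.range' a (d + 1) := by
  induction d with
  | zero => simp [pathWalk]
  | succ d ih =>
    simp only [pathWalk, Walk.support_concat, List.concat_eq_append, List.map_append,
      ih (by omega)]
    conv_rhs => rw [List.range'_1_concat, List.range'_1_concat]
    rw [List.range'_1_concat]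
    simp

lemma pathWalk_edges (n a : ℕ) (ha : a < n) (d : ℕ) (h : a + d < n) :
    (pathWalk n a ha d h).edges.map (pathColor n)
      = (List.range' (a + 1) d).map (fun m => (Nat.factorization m) 2) := by
  induction d with
  | zero => simp [pathWalk]
  | succ d ih =>
    simp only [pathWalk, Walk.edges_concat, List.concat_eq_append, List.map_append,
      ih (by omega)]
    rw [List.range'_1_concat, List.map_append]
    simp only [List.map_cons, List.map_nil, pathColor, Sym2.lift_mk]
    have hmax : (a + d) ⊔ (a + (d + 1)) = a + 1 + d := by
      show max (a + d) (a + (d + 1)) = _; omega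
    rw [hmax]

lemma pathWalk_isPath (n a : ℕ) (ha : a < n) (d : ℕ) (h : a + d < n) :
    (pathWalk n a ha d h).IsPath := by
  rw [Walk.isPath_def]
  have hs := pathWalk_support n a ha d h
  have hnd : ((pathWalk n a ha d h).support.map Fin.val).Nodup := by
    rw [hs]; exact List.nodup_range'
  exact hnd.of_map _

/-- In any interval `(a, b]` there is exactly one integer achieving the maximal
2-adic valuation. -/
lemma exists_col (a b : ℕ) (hab : a < b) :
    ∃ col, (List.range' (a + 1) (b - a)).countP
      (fun m => (Nat.factorization m) 2 = col) = 1 := by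
  classical
  set f : ℕ → ℕ := fun m => (Nat.factorization m) 2 with hf
  have hne : (Finset.Ioc a b).Nonempty := ⟨b, by simp [hab]⟩
  obtain ⟨m₀, hm₀, hsup⟩ := Finset.exists_mem_eq_sup (Finset.Ioc a b) hne f
  set t := f m₀ with ht
  have hsup' : ∀ x ∈ Finset.Ioc a b, f x ≤ t := by
    intro x hx
    calc f x ≤ (Finset.Ioc a b).sup f := Finset.le_sup hx
    _ = t := hsup
  have huniq : ∀ x ∈ Finset.Ioc a b, f x = t → x = m₀ := by
    intro x hx hfx
    by_contra hne2
    obtain ⟨p, q, hpq, hp, hq, hfp, hfq⟩ : ∃ p q, p < q ∧ p ∈ Finset.Ioc a b ∧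
        q ∈ Finset.Ioc a b ∧ f p = t ∧ f q = t := by
      rcases lt_or_gt_of_ne hne2 with hlt | hlt
      · exact ⟨x, m₀, hlt, hx, hm₀, hfx, rfl⟩
      · exact ⟨m₀, x, hlt, hm₀, hx, rfl, hfx⟩
    have hpIoc := Finset.mem_Ioc.mp hp
    have hqIoc := Finset.mem_Ioc.mp hq
    have hp0 : p ≠ 0 := by omega
    have hdvdp : 2 ^ t ∣ p := by rw [← hfp]; exact Nat.ordProj_dvd p 2
    have hdvdq : 2 ^ t ∣ q := by rw [← hfq]; exact Nat.ordProj_dvd q 2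
    have hge : p + 2 ^ t ≤ q := by
      have hdvd : 2 ^ t ∣ q - p := Nat.dvd_sub hdvdq hdvdp
      have hpos : 0 < q - p := by omega
      have := Nat.le_of_dvd hpos hdvd
      omega
    have hzmem : p + 2 ^ t ∈ Finset.Ioc a b := by
      rw [Finset.mem_Ioc]
      have h2pos : 0 < 2 ^ t := Nat.two_pow_pos t
      omega
    obtain ⟨cc, hcc⟩ := hdvdp
    have hcompl : ordCompl[2] p = cc := by
      have hft : p.factorization 2 = t := hfp
      rw [hft, hcc]
      rw [Nat.mul_div_cancel_left _ (Nat.two_pow_pos t)]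
    have hodd : ¬ 2 ∣ cc := by
      rw [← hcompl]
      exact Nat.not_dvd_ordCompl Nat.prime_two hp0
    have h2 : 2 ∣ cc + 1 := by
      rcases Nat.even_or_odd cc with hev | hod
      · exact absurd hev.two_dvd hodd
      · exact (Nat.even_add_one.mpr (Nat.not_even_iff_odd.mpr hod)).two_dvd
    have hdvd2 : 2 ^ (t + 1) ∣ p + 2 ^ t := by
      have hrw : p + 2 ^ t = 2 ^ t * (cc + 1) := by rw [hcc]; ring
      rw [hrw, pow_succ]
      exact mul_dvd_mul_left _ h2
    have hz0 : p + 2 ^ t ≠ 0 := by omega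
    have hle : t + 1 ≤ f (p + 2 ^ t) :=
      (Nat.Prime.pow_dvd_iff_le_factorization Nat.prime_two hz0).mp hdvd2
    have := hsup' _ hzmem
    omega
  refine ⟨t, ?_⟩
  have hmem_iff : ∀ m, m ∈ List.range' (a + 1) (b - a) ↔ m ∈ Finset.Ioc a b := by
    intro m; rw [List.mem_range'_1, Finset.mem_Ioc]; omega
  rw [List.countP_eq_length_filter]
  apply aux_filter_length_one List.nodup_range' (a := m₀)
  · exact (hmem_iff m₀).mpr hm₀
  · exact decide_eq_true rfl
  · intro x hx hpx
    simp only [decide_eq_true_eq] at hpx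
    exact huniq x ((hmem_iff x).mp hx) hpx

lemma pathGraph_colors_lt (n : ℕ) (e : Sym2 (Fin n)) (he : e ∈ (SimpleGraph.pathGraph n).edgeSet) :
    pathColor n e < Nat.clog 2 n := by
  induction e using Sym2.ind with
  | _ x y =>
    rw [SimpleGraph.mem_edgeSet, pathGraph_adj] at he
    have hx := x.isLt
    have hy := y.isLt
    have hcolor : pathColor n s(x, y) = (Nat.factorization (max x.val y.val)) 2 := rfl
    rw [hcolor]
    set m := max x.val y.val with hm
    have hm1 : 1 ≤ m := by
      rcases he with h | h
      · rw [hm, Nat.max_eq_right (by omega)]; omega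
      · rw [hm, Nat.max_eq_left (by omega)]; omega
    have hm2 : m < n := by
      rw [hm]
      rcases Nat.le_total x.val y.val with h | h
      · rw [Nat.max_eq_right h]; omega
      · rw [Nat.max_eq_left h]; omega
    have h1 : 2 ^ (Nat.factorization m) 2 ≤ m :=
      Nat.le_of_dvd (by omega) (Nat.ordProj_dvd m 2)
    have h2 : n ≤ 2 ^ Nat.clog 2 n := Nat.le_pow_clog one_lt_two n
    have h3 : 2 ^ (Nat.factorization m) 2 < 2 ^ Nat.clog 2 n := by omega
    exact (Nat.pow_lt_pow_iff_right one_lt_two).mp h3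

lemma pathGraph_cfc (n : ℕ) : IsCFCColoring (SimpleGraph.pathGraph n) (pathColor n) := by
  have main : ∀ x y : Fin n, x.val < y.val → ∃ p : (SimpleGraph.pathGraph n).Walk x y,
      p.IsPath ∧ ∃ col : ℕ, (p.edges.filter (fun e => pathColor n e = col)).length = 1 := by
    intro x y hxy
    have h1 : x.val + (y.val - x.val) < n := by have := y.isLt; omega
    have hu : (⟨x.val, x.isLt⟩ : Fin n) = x := rfl
    have hv : (⟨x.val + (y.val - x.val), h1⟩ : Fin n) = y :=
      Fin.ext (show x.val + (y.val - x.val) = y.val from by omega)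
    refine ⟨(pathWalk n x.val x.isLt (y.val - x.val) h1).copy hu hv, ?_, ?_⟩
    · rw [Walk.isPath_copy]
      exact pathWalk_isPath _ _ _ _ _
    · obtain ⟨col, hcol⟩ := exists_col x.val y.val hxy
      refine ⟨col, ?_⟩
      rw [Walk.edges_copy, ← List.countP_eq_length_filter]
      have hcomp : (pathWalk n x.val x.isLt (y.val - x.val) h1).edges.countP
          (fun e => pathColor n e = col)
          = ((pathWalk n x.val x.isLt (y.val - x.val) h1).edges.map (pathColor n)).countP
            (fun m => m = col) := by
        rw [List.countP_map]; rfl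
      rw [hcomp, pathWalk_edges n x.val x.isLt (y.val - x.val) h1, List.countP_map]
      exact hcol
  intro u v huv
  have hval : u.val ≠ v.val := fun h => huv (Fin.ext h)
  rcases lt_or_gt_of_ne hval with h | h
  · exact main u v h
  · obtain ⟨p, hp, col, hcol⟩ := main v u h
    refine ⟨p.reverse, hp.reverse, col, ?_⟩
    rw [Walk.edges_reverse, List.filter_reverse, List.length_reverse]
    exact hcol

end Upper

/-- For a tree `T` of order `n`, `cfc(T) ≥ ⌈log₂ n⌉`; consequently the path
`P_n` minimizes `cfc` among all trees of order `n`. -/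
theorem clog_le_cfc_tree {V : Type*} [Fintype V] (T : SimpleGraph V) (hT : T.IsTree) :
    Nat.clog 2 (Fintype.card V) ≤ cfcNum T ∧
    cfcNum (SimpleGraph.pathGraph (Fintype.card V)) ≤ cfcNum T := by
  have hSne : {k | ∃ c : Sym2 V → ℕ, (∀ e ∈ T.edgeSet, c e < k) ∧ IsCFCColoring T c}.Nonempty :=
    exists_cfc hT
  have hlow : Nat.clog 2 (Fintype.card V) ≤ cfcNum T := by
    apply le_csInf hSne
    rintro k ⟨c, hc, hcfc⟩
    exact (Nat.clog_le_iff_le_pow one_lt_two).mpr (card_le_two_pow hT hc hcfc)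
  refine ⟨hlow, le_trans ?_ hlow⟩
  apply Nat.sInf_le
  exact ⟨pathColor _, pathGraph_colors_lt _, pathGraph_cfc _⟩
end

section
/- For any tree T of order n, the depth d(T) produced by the recursive edge-splitting algorithm (repeatedly deleting a balanced edge from each nontrivial component until all components are singletons) satisfies max{Δ(T), ⌈log₂ n⌉} ≤ d(T) ≤ n−1. -/
/-- The graph on `V` consisting of the edges of `T` with both ends in `S`,
with the edge `{u, v}` removed. -/
def eRestrict {V : Type*} (T : SimpleGraph V) (S : Set V) (u v : V) : SimpleGraph V :=
  SimpleGraph.fromRel (fun x y => T.Adj x y ∧ x ∈ S ∧ y ∈ S ∧ s(x, y) ≠ s(u, v))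

/-- After removing the edge `{u, v}` from the component `S`, the vertex set of
the piece containing `w`. -/
def side {V : Type*} (T : SimpleGraph V) (S : Set V) (u v w : V) : Set V :=
  {x | (eRestrict T S u v).Reachable w x}

/-- The (absolute) difference of the orders of the two pieces obtained by
removing the edge `{u, v}` from the component `S`. -/
noncomputable def sideDiff {V : Type*} (T : SimpleGraph V) (S : Set V) (u v : V) : ℕ :=
  (((side T S u v u).ncard : ℤ) - ((side T S u v v).ncard : ℤ)).natAbs

/-- The edge `{u, v}` is a balanced edge of the component `S` of `T`:
it minimizes `sideDiff` among all edges of `T` inside `S`. -/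
def BalancedIn {V : Type*} (T : SimpleGraph V) (S : Set V) (u v : V) : Prop :=
  T.Adj u v ∧ u ∈ S ∧ v ∈ S ∧
    ∀ x y : V, T.Adj x y → x ∈ S → y ∈ S → sideDiff T S u v ≤ sideDiff T S x y

/-- `SplitDepth T S d` holds when the recursive balanced-edge-splitting process,
started on the component with vertex set `S`, can terminate in `d` rounds:
a singleton needs `0` rounds, and otherwise one balanced edge is removed and
the process continues in parallel on the two resulting components. -/
inductive SplitDepth {V : Type*} (T : SimpleGraph V) : Set V → ℕ → Prop
  | single (v : V) : SplitDepth T {v} 0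
  | split (S : Set V) (u v : V) (d₁ d₂ : ℕ) :
      BalancedIn T S u v →
      SplitDepth T (side T S u v u) d₁ →
      SplitDepth T (side T S u v v) d₂ →
      SplitDepth T S (1 + max d₁ d₂)

namespace SplitAux

open SimpleGraph

variable {V : Type*} (T : SimpleGraph V) (S : Set V) (u v : V)

def indSub : SimpleGraph V :=
  SimpleGraph.fromRel (fun x y => T.Adj x y ∧ x ∈ S ∧ y ∈ S)

def Conn (T : SimpleGraph V) (S : Set V) : Prop :=
  ∀ ⦃x⦄, x ∈ S → ∀ ⦃y⦄, y ∈ S → (indSub T S).Reachable x y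

lemma mem_side {w x : V} : x ∈ side T S u v w ↔ (eRestrict T S u v).Reachable w x := Iff.rfl

lemma eRestrict_adj_T {x y : V} (h : (eRestrict T S u v).Adj x y) :
    T.Adj x y ∧ x ∈ S ∧ y ∈ S ∧ s(x, y) ≠ s(u, v) := by
  rw [eRestrict, SimpleGraph.fromRel_adj] at h
  rcases h with ⟨hne, h | h⟩
  · exact ⟨h.1, h.2.1, h.2.2.1, h.2.2.2⟩
  · exact ⟨h.1.symm, h.2.2.1, h.2.1, by rw [Sym2.eq_swap]; exact h.2.2.2⟩

lemma eRestrict_adj_of {x y : V} (h : T.Adj x y) (hx : x ∈ S) (hy : y ∈ S)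
    (hs : s(x, y) ≠ s(u, v)) : (eRestrict T S u v).Adj x y := by
  rw [eRestrict, SimpleGraph.fromRel_adj]
  exact ⟨h.ne, Or.inl ⟨h, hx, hy, hs⟩⟩

lemma walk_mem : ∀ {w x : V}, (eRestrict T S u v).Walk w x → w ∈ S → x ∈ S := by
  intro w x p
  induction p with
  | nil => exact id
  | cons h _ ih => exact fun _ => ih (eRestrict_adj_T T S u v h).2.2.1

lemma side_subset {w : V} (hw : w ∈ S) : side T S u v w ⊆ S := by
  intro x hx
  obtain ⟨p⟩ := (mem_side T S u v).mp hx
  exact walk_mem T S u v p hw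

lemma self_mem_side {w : V} : w ∈ side T S u v w := SimpleGraph.Reachable.refl w

lemma mem_side_of_adj {w x y : V} (hx : x ∈ side T S u v w)
    (h : (eRestrict T S u v).Adj x y) : y ∈ side T S u v w :=
  hx.trans h.reachable

lemma side_conn_aux {w : V} :
    ∀ {x y : V}, (eRestrict T S u v).Walk x y → x ∈ side T S u v w →
      (indSub T (side T S u v w)).Reachable x y := by
  intro x y p
  induction p with
  | nil => exact fun _ => SimpleGraph.Reachable.refl _
  | @cons a c b h q ih =>
    intro hx
    have hz := mem_side_of_adj T S u v hx h
    have hadj : (indSub T (side T S u v w)).Adj a c := by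
      rw [indSub, SimpleGraph.fromRel_adj]
      exact ⟨h.ne, Or.inl ⟨(eRestrict_adj_T T S u v h).1, hx, hz⟩⟩
    exact hadj.reachable.trans (ih hz)

lemma conn_side (w : V) : Conn T (side T S u v w) := by
  intro x hx y hy
  obtain ⟨p⟩ := (SimpleGraph.Reachable.symm hx).trans hy
  exact side_conn_aux T S u v p hx

lemma eRestrict_le : eRestrict T S u v ≤ T \ SimpleGraph.fromEdgeSet {s(u, v)} := by
  intro x y h
  obtain ⟨ha, _, _, hne⟩ := eRestrict_adj_T T S u v h
  refine ⟨ha, ?_⟩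
  rw [SimpleGraph.fromEdgeSet_adj]
  rintro ⟨hm, -⟩
  exact hne hm

lemma side_disjoint (hT : T.IsAcyclic) (huv : T.Adj u v) :
    Disjoint (side T S u v u) (side T S u v v) := by
  rw [Set.disjoint_left]
  intro x hxu hxv
  have hreach : (eRestrict T S u v).Reachable u v :=
    SimpleGraph.Reachable.trans hxu (SimpleGraph.Reachable.symm hxv)
  have hb := SimpleGraph.isAcyclic_iff_forall_adj_isBridge.mp hT huv
  rw [SimpleGraph.isBridge_iff] at hb
  exact hb (hreach.mono (eRestrict_le T S u v))

lemma side_cover (hc : Conn T S) (hb : BalancedIn T S u v) :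
    S ⊆ side T S u v u ∪ side T S u v v := by
  obtain ⟨huv, hu, hv, -⟩ := hb
  intro x hx
  obtain ⟨p⟩ := hc hu hx
  have key : ∀ {a b : V}, (indSub T S).Walk a b →
      a ∈ side T S u v u ∪ side T S u v v →
      b ∈ side T S u v u ∪ side T S u v v := by
    intro a b p
    induction p with
    | nil => exact id
    | @cons a c b h q ih =>
      intro ha
      apply ih
      rw [indSub, SimpleGraph.fromRel_adj] at h
      obtain ⟨hne, h⟩ := h
      have hac : T.Adj a c ∧ a ∈ S ∧ c ∈ S := by
        rcases h with h | h
        · exact ⟨h.1, h.2.1, h.2.2⟩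
        · exact ⟨h.1.symm, h.2.2, h.2.1⟩
      by_cases hs : s(a, c) = s(u, v)
      · rcases Sym2.eq_iff.mp hs with ⟨h1, h2⟩ | ⟨h1, h2⟩
        · rw [h2]; exact Or.inr (self_mem_side T S u v)
        · rw [h2]; exact Or.inl (self_mem_side T S u v)
      · have hadj := eRestrict_adj_of T S u v hac.1 hac.2.1 hac.2.2 hs
        rcases ha with h1 | h1
        · exact Or.inl (mem_side_of_adj T S u v h1 hadj)
        · exact Or.inr (mem_side_of_adj T S u v h1 hadj)
  exact key p (Or.inl (self_mem_side T S u v))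

end SplitAux


namespace SplitAux

open SimpleGraph

variable {V : Type*} [Fintype V] {T : SimpleGraph V}

lemma depth_add_one_le (hT : T.IsAcyclic) :
    ∀ {S : Set V} {d : ℕ}, SplitDepth T S d → d + 1 ≤ S.ncard := by
  intro S d h
  induction h with
  | single w => simp
  | split S u v d₁ d₂ hb h1 h2 ih1 ih2 =>
    have hdisj := side_disjoint T S u v hT hb.1
    have hsu : side T S u v u ⊆ S := side_subset T S u v hb.2.1
    have hsv : side T S u v v ⊆ S := side_subset T S u v hb.2.2.1
    have hle : (side T S u v u).ncard + (side T S u v v).ncard ≤ S.ncard := by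
      rw [← Set.ncard_union_eq hdisj (Set.toFinite _) (Set.toFinite _)]
      exact Set.ncard_le_ncard (Set.union_subset hsu hsv) (Set.toFinite S)
    rcases max_choice d₁ d₂ with hm | hm <;> rw [hm] <;> omega

lemma ncard_le_two_pow (hT : T.IsAcyclic) :
    ∀ {S : Set V} {d : ℕ}, SplitDepth T S d → Conn T S → S.ncard ≤ 2 ^ d := by
  intro S d h
  induction h with
  | single w => intro _; simp
  | split S u v d₁ d₂ hb h1 h2 ih1 ih2 =>
    intro hc
    have hcov := side_cover T S u v hc hb
    have hA := ih1 (conn_side T S u v u)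
    have hB := ih2 (conn_side T S u v v)
    have hle : S.ncard ≤ (side T S u v u).ncard + (side T S u v v).ncard :=
      le_trans (Set.ncard_le_ncard hcov (Set.toFinite _)) (Set.ncard_union_le _ _)
    have hp1 : (2 : ℕ) ^ d₁ ≤ 2 ^ max d₁ d₂ :=
      Nat.pow_le_pow_right (by norm_num) (le_max_left _ _)
    have hp2 : (2 : ℕ) ^ d₂ ≤ 2 ^ max d₁ d₂ :=
      Nat.pow_le_pow_right (by norm_num) (le_max_right _ _)
    have : (2 : ℕ) ^ (1 + max d₁ d₂) = 2 ^ max d₁ d₂ + 2 ^ max d₁ d₂ := by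
      rw [pow_add]; ring
    omega

lemma degIn_le (hT : T.IsAcyclic) :
    ∀ {S : Set V} {d : ℕ}, SplitDepth T S d → Conn T S →
      ∀ w ∈ S, ({x ∈ S | T.Adj w x}).ncard ≤ d := by
  intro S d h
  induction h with
  | single w' =>
    intro _ w hw
    rcases hw with rfl
    have : {x ∈ ({w} : Set V) | T.Adj w x} = ∅ := by
      ext x
      simp only [Set.mem_setOf_eq, Set.mem_singleton_iff, Set.mem_empty_iff_false, iff_false]
      rintro ⟨rfl, hadj⟩
      exact T.loopless.irrefl _ hadj
    rw [this]; simp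
  | split S u v d₁ d₂ hb h1 h2 ih1 ih2 =>
    intro hc w hw
    have hdisj := side_disjoint T S u v hT hb.1
    have hcov := side_cover T S u v hc hb
    have hsu : side T S u v u ⊆ S := side_subset T S u v hb.2.1
    have hsv : side T S u v v ⊆ S := side_subset T S u v hb.2.2.1
    rcases hcov hw with hwu | hwv
    · -- w on the u-side
      have key : {x ∈ S | T.Adj w x} ⊆ insert v {x ∈ side T S u v u | T.Adj w x} := by
        rintro x ⟨hxS, hadj⟩
        by_cases hs : s(w, x) = s(u, v)
        · rcases Sym2.eq_iff.mp hs with ⟨h1', h2'⟩ | ⟨h1', h2'⟩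
          · rw [h2']; exact Set.mem_insert _ _
          · exfalso
            have : w ∈ side T S u v v := by rw [h1']; exact self_mem_side T S u v
            exact Set.disjoint_left.mp hdisj hwu this
        · have hadj' := eRestrict_adj_of T S u v hadj (hsu hwu) hxS hs
          exact Set.mem_insert_of_mem _ ⟨mem_side_of_adj T S u v hwu hadj', hadj⟩
      have h1' := ih1 (conn_side T S u v u) w hwu
      have := Set.ncard_le_ncard key (Set.toFinite _)
      have := Set.ncard_insert_le v {x ∈ side T S u v u | T.Adj w x}
      have := le_max_left d₁ d₂
      omega
    · -- w on the v-side
      have key : {x ∈ S | T.Adj w x} ⊆ insert u {x ∈ side T S u v v | T.Adj w x} := by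
        rintro x ⟨hxS, hadj⟩
        by_cases hs : s(w, x) = s(u, v)
        · rcases Sym2.eq_iff.mp hs with ⟨h1', h2'⟩ | ⟨h1', h2'⟩
          · exfalso
            have : w ∈ side T S u v u := by rw [h1']; exact self_mem_side T S u v
            exact Set.disjoint_right.mp hdisj hwv this
          · rw [h2']; exact Set.mem_insert _ _
        · have hadj' := eRestrict_adj_of T S u v hadj (hsv hwv) hxS hs
          exact Set.mem_insert_of_mem _ ⟨mem_side_of_adj T S u v hwv hadj', hadj⟩
      have h2' := ih2 (conn_side T S u v v) w hwv
      have := Set.ncard_le_ncard key (Set.toFinite _)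
      have := Set.ncard_insert_le u {x ∈ side T S u v v | T.Adj w x}
      have := le_max_right d₁ d₂
      omega

end SplitAux


/-- For a tree `T` of order `n`, any depth `d` achievable by the recursive
balanced-edge-splitting algorithm satisfies `max {Δ(T), ⌈log₂ n⌉} ≤ d ≤ n - 1`. -/
theorem splitDepth_bounds {V : Type*} [Fintype V] (T : SimpleGraph V)
    [DecidableRel T.Adj] (hT : T.IsTree) (d : ℕ)
    (hd : SplitDepth T Set.univ d) :
    max T.maxDegree (Nat.clog 2 (Fintype.card V)) ≤ d ∧ d ≤ Fintype.card V - 1 := by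
  have hac : T.IsAcyclic := hT.IsAcyclic
  have hconn : SplitAux.Conn T Set.univ := by
    intro x _ y _
    have hle : T ≤ SplitAux.indSub T Set.univ := by
      intro a b h
      rw [SplitAux.indSub, SimpleGraph.fromRel_adj]
      exact ⟨h.ne, Or.inl ⟨h, trivial, trivial⟩⟩
    exact (hT.isConnected.preconnected x y).mono hle
  have hcard : (Set.univ : Set V).ncard = Fintype.card V := by
    rw [Set.ncard_univ, Nat.card_eq_fintype_card]
  refine ⟨max_le ?_ ?_, ?_⟩
  · apply SimpleGraph.maxDegree_le_of_forall_degree_le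
    intro w
    have h := SplitAux.degIn_le hac hd hconn w trivial
    have hset : {x ∈ (Set.univ : Set V) | T.Adj w x} = T.neighborSet w := by
      ext x; simp [SimpleGraph.mem_neighborSet]
    rw [hset] at h
    have hdeg : T.degree w = (T.neighborSet w).ncard := by
      rw [Set.ncard_eq_toFinset_card', ← SimpleGraph.neighborFinset_def]
      rfl
    omega
  · rw [Nat.clog_le_iff_le_pow (by norm_num)]
    have := SplitAux.ncard_le_two_pow hac hd hconn
    omega
  · have := SplitAux.depth_add_one_le hac hd
    have h1 : 1 ≤ Fintype.card V := by omega
    omega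
end

section
/- For the binomial tree B_k with 2^{k−1} vertices (k ≥ 2), the recursive balanced-edge-splitting depth satisfies d(B_k) = k−1. -/
/-- The binomial tree `B_k` on `2^(k-1)` vertices: `B_1` is a single vertex,
and `B_k` is two copies of `B_{k-1}` joined by an edge between their roots.
Equivalently, each nonzero vertex `x` is joined to `x` with its highest set
bit removed. -/
def binomialTree (k : ℕ) : SimpleGraph (Fin (2 ^ (k - 1))) :=
  SimpleGraph.fromRel (fun x y =>
    (x : ℕ) ≠ 0 ∧ (y : ℕ) = (x : ℕ) - 2 ^ Nat.log 2 (x : ℕ))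

/-!
Number the vertices of `B_k` as `0, …, 2^(k-1) - 1`, the parent of `x ≠ 0` being `x` with its
highest bit cleared. The vertices `≡ r (mod 2^m)`, `r < 2^m`, span a copy of `B_{k-m}` rooted at
`r`. Inside it, cutting the edge from `x` to its parent leaves on the side of `x` exactly the
vertices `≡ x (mod 2^(log₂ x + 1))`, so the two sides differ by `2^(k-1-m) - 2^(k-1-log₂ x)`.
This vanishes only for `log₂ x = m`, i.e. for the edge from `2^m + r` to `r`, which is therefore
the unique balanced edge; it splits the class into the two classes of `r` modulo `2^(m+1)`.
Induction on `k - 1 - m` shows that every run of the process on the class takes `k - 1 - m`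
rounds.
-/

open SimpleGraph

section Splitting

variable {V : Type*} {T : SimpleGraph V} {S A : Set V} {u v w : V}

lemma eRestrict_adj {a b : V} :
    (eRestrict T S u v).Adj a b ↔ T.Adj a b ∧ a ∈ S ∧ b ∈ S ∧ s(a, b) ≠ s(u, v) := by
  simp only [eRestrict, fromRel_adj]
  constructor
  · rintro ⟨-, h | ⟨hba, hb, ha, hne⟩⟩
    · exact h
    · exact ⟨hba.symm, ha, hb, by rwa [Sym2.eq_swap]⟩
  · rintro h
    exact ⟨h.1.ne, Or.inl h⟩

lemma side_comm : side T S u v w = side T S v u w := by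
  rw [side, side, eRestrict, eRestrict, Sym2.eq_swap (a := u)]

lemma sideDiff_comm : sideDiff T S u v = sideDiff T S v u := by
  rw [sideDiff, sideDiff, side_comm (u := u), side_comm (u := u) (w := v)]
  omega

lemma mem_of_reachable_of_adj_closed {G : SimpleGraph V}
    (hA : ∀ a b, G.Adj a b → a ∈ A → b ∈ A) {a b : V} (h : G.Reachable a b) (ha : a ∈ A) :
    b ∈ A := by
  rw [reachable_iff_reflTransGen] at h
  induction h with
  | refl => exact ha
  | tail _ hadj ih => exact hA _ _ hadj ih

lemma reachable_of_descent {G : SimpleGraph V} {ρ : V} (f : V → ℕ)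
    (hstep : ∀ a ∈ A, a ≠ ρ → ∃ b ∈ A, G.Adj b a ∧ f b < f a) :
    ∀ a ∈ A, G.Reachable ρ a := by
  intro a
  induction a using (measure f).wf.induction with
  | _ a ih =>
    intro ha
    by_cases haρ : a = ρ
    · rw [haρ]
    · obtain ⟨b, hb, hba, hfb⟩ := hstep a ha haρ
      exact (ih b hfb hb).trans hba.reachable

lemma side_eq_of_adj_closed (hw : w ∈ A)
    (hclosed : ∀ a b, (eRestrict T S u v).Adj a b → a ∈ A → b ∈ A)
    (hreach : ∀ a ∈ A, (eRestrict T S u v).Reachable w a) :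
    side T S u v w = A :=
  Set.ext fun _ => ⟨fun h => mem_of_reachable_of_adj_closed hclosed h hw, hreach _⟩

def IsSplitDepth (T : SimpleGraph V) (S : Set V) (d : ℕ) : Prop :=
  SplitDepth T S d ∧ ∀ d', SplitDepth T S d' → d' = d

lemma isSplitDepth_singleton (v : V) : IsSplitDepth T {v} 0 := by
  refine ⟨.single v, fun d hd => ?_⟩
  generalize hS : ({v} : Set V) = S at hd
  cases hd with
  | single => rfl
  | split _ a b _ _ hb =>
    obtain ⟨hab, ha, hb, -⟩ := hb
    rw [← hS, Set.mem_singleton_iff] at ha hb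
    exact absurd (ha.trans hb.symm) hab.ne

lemma IsSplitDepth.of_balancedIn {d₁ d₂ : ℕ} (hb : BalancedIn T S u v)
    (huniq : ∀ x y, BalancedIn T S x y → s(x, y) = s(u, v))
    (h₁ : IsSplitDepth T (side T S u v u) d₁) (h₂ : IsSplitDepth T (side T S u v v) d₂) :
    IsSplitDepth T S (1 + max d₁ d₂) := by
  refine ⟨.split S u v d₁ d₂ hb h₁.1 h₂.1, fun d hd => ?_⟩
  cases hd with
  | single w => exact absurd (hb.2.1.trans hb.2.2.1.symm) hb.1.ne
  | split _ x y e₁ e₂ hxy he₁ he₂ =>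
    rcases Sym2.eq_iff.1 (huniq x y hxy) with ⟨rfl, rfl⟩ | ⟨rfl, rfl⟩
    · rw [h₁.2 e₁ he₁, h₂.2 e₂ he₂]
    · rw [side_comm] at he₁ he₂
      rw [h₂.2 e₁ he₁, h₁.2 e₂ he₂, max_comm]

end Splitting

def clearTopBit (x : ℕ) : ℕ := x - 2 ^ Nat.log 2 x

section ClearTopBit

variable {x : ℕ}

lemma two_pow_log_add_clearTopBit (hx : x ≠ 0) : 2 ^ Nat.log 2 x + clearTopBit x = x :=
  Nat.add_sub_cancel' (Nat.pow_log_le_self 2 hx)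

lemma clearTopBit_lt_two_pow_log (hx : x ≠ 0) : clearTopBit x < 2 ^ Nat.log 2 x := by
  have hlt := Nat.lt_pow_succ_log_self one_lt_two x
  have hsum := two_pow_log_add_clearTopBit hx
  rw [pow_succ] at hlt
  omega

lemma clearTopBit_lt (hx : x ≠ 0) : clearTopBit x < x := by
  have := two_pow_log_add_clearTopBit hx
  have := Nat.two_pow_pos (Nat.log 2 x)
  omega

lemma clearTopBit_mod_two_pow {j : ℕ} (hx : x ≠ 0) (hj : j ≤ Nat.log 2 x) :
    clearTopBit x % 2 ^ j = x % 2 ^ j := by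
  obtain ⟨t, ht⟩ := pow_dvd_pow 2 hj
  conv_rhs => rw [← two_pow_log_add_clearTopBit hx, ht, Nat.mul_add_mod]

lemma log_two_pow_add {j c : ℕ} (hc : c < 2 ^ j) : Nat.log 2 (2 ^ j + c) = j :=
  Nat.log_eq_of_pow_le_of_lt_pow (by omega) (by rw [pow_succ]; omega)

lemma clearTopBit_two_pow_add {j c : ℕ} (hc : c < 2 ^ j) : clearTopBit (2 ^ j + c) = c := by
  rw [clearTopBit, log_two_pow_add hc]
  omega

/-- The only edge `{c, clearTopBit c}` leaving the residue class of `x` modulo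
`2^(log₂ x + 1)` is the one at `c = x`. -/
lemma clearTopBit_mod_eq_iff {c : ℕ} (hc : c ≠ 0) (hx : x ≠ 0) (hcx : c ≠ x) :
    clearTopBit c % 2 ^ (Nat.log 2 x + 1) = x ↔ c % 2 ^ (Nat.log 2 x + 1) = x := by
  rcases le_or_gt (Nat.log 2 x + 1) (Nat.log 2 c) with h | h
  · rw [clearTopBit_mod_two_pow hc h]
  · have hc' : c < 2 ^ (Nat.log 2 x + 1) :=
      (Nat.lt_pow_succ_log_self one_lt_two c).trans_le (Nat.pow_le_pow_right two_pos h)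
    rw [Nat.mod_eq_of_lt hc', Nat.mod_eq_of_lt ((clearTopBit_lt hc).trans hc'),
      iff_false_right hcx]
    have := clearTopBit_lt_two_pow_log hc
    have := Nat.pow_le_pow_right two_pos (Nat.lt_succ_iff.1 h)
    have := Nat.pow_log_le_self 2 hx
    omega

end ClearTopBit

def residueClass (n j c : ℕ) : Set (Fin n) := {z | (z : ℕ) % 2 ^ j = c}

section ResidueClass

variable {n j c : ℕ}

@[simp]
lemma mem_residueClass {z : Fin n} : z ∈ residueClass n j c ↔ (z : ℕ) % 2 ^ j = c := Iff.rfl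

lemma mem_residueClass_log_succ (x : Fin n) : x ∈ residueClass n (Nat.log 2 x + 1) x :=
  Nat.mod_eq_of_lt (Nat.lt_pow_succ_log_self one_lt_two _)

lemma clearTopBit_mem_residueClass {a : Fin n} (ha : a ∈ residueClass n j c) (hac : (a : ℕ) ≠ c) :
    ∃ b ∈ residueClass n j c, (a : ℕ) ≠ 0 ∧ (b : ℕ) = clearTopBit a := by
  have hja : 2 ^ j ≤ (a : ℕ) := by
    by_contra! hlt
    exact hac (Nat.mod_eq_of_lt hlt ▸ ha)
  have ha0 : (a : ℕ) ≠ 0 := by have := Nat.two_pow_pos j; omega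
  exact ⟨⟨clearTopBit a, (clearTopBit_lt ha0).trans a.isLt⟩,
    (clearTopBit_mod_two_pow ha0 (Nat.le_log_of_pow_le one_lt_two hja)).trans ha, ha0, rfl⟩

lemma residueClass_subset {j' : ℕ} (h : j ≤ j') :
    residueClass n j' c ⊆ residueClass n j (c % 2 ^ j) := fun z hz => by
  rw [mem_residueClass, ← hz, Nat.mod_mod_of_dvd _ (pow_dvd_pow 2 h)]

lemma residueClass_zero_zero : residueClass n 0 0 = Set.univ := by
  ext z
  simp [Nat.mod_one]

lemma residueClass_eq_singleton {K : ℕ} (hc : c < 2 ^ K) :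
    residueClass (2 ^ K) K c = {⟨c, hc⟩} := by
  ext z
  simp [Fin.ext_iff, Nat.mod_eq_of_lt z.isLt]

lemma residueClass_diff_residueClass_two_pow_add {m r : ℕ} (hr : r < 2 ^ m) :
    residueClass n m r \ residueClass n (m + 1) (2 ^ m + r) = residueClass n (m + 1) r := by
  ext z
  have hbit : (z : ℕ) / 2 ^ m % 2 < 2 := Nat.mod_lt _ two_pos
  simp only [Set.mem_sdiff, mem_residueClass, Nat.mod_pow_succ]
  interval_cases (z : ℕ) / 2 ^ m % 2 <;> omega

lemma ncard_residueClass {K : ℕ} (hj : j ≤ K) (hc : c < 2 ^ j) :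
    (residueClass (2 ^ K) j c).ncard = 2 ^ (K - j) := by
  have himage : Fin.val '' residueClass (2 ^ K) j c =
      {x ∈ Finset.range (2 ^ K) | x ≡ c [MOD 2 ^ j]} := by
    ext x
    simp only [Set.mem_image, mem_residueClass, Finset.coe_filter, Finset.mem_range,
      Set.mem_ofPred_eq, Nat.ModEq, Nat.mod_eq_of_lt hc]
    exact ⟨fun ⟨z, hz, hzx⟩ => hzx ▸ ⟨z.isLt, hz⟩, fun ⟨hx, hxc⟩ => ⟨⟨x, hx⟩, hxc, rfl⟩⟩
  rw [← Set.ncard_image_of_injective _ Fin.val_injective, himage, Set.ncard_coe_finset,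
    ← Nat.count_eq_card_filter_range, Nat.count_modEq_card _ (Nat.two_pow_pos j),
    Nat.mod_eq_of_lt hc, ← Nat.add_sub_cancel' hj, pow_add]
  simp

end ResidueClass

section BinomialTree

variable {k m r : ℕ} {S : Set (Fin (2 ^ (k - 1)))} {a b u v x y : Fin (2 ^ (k - 1))}

lemma binomialTree_adj :
    (binomialTree k).Adj a b ↔
      ((a : ℕ) ≠ 0 ∧ (b : ℕ) = clearTopBit a) ∨ ((b : ℕ) ≠ 0 ∧ (a : ℕ) = clearTopBit b) := by
  rw [binomialTree, fromRel_adj]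
  refine ⟨And.right, fun h => ⟨?_, h⟩⟩
  rintro rfl
  rcases h with ⟨h0, h⟩ | ⟨h0, h⟩ <;> exact (clearTopBit_lt h0).ne' h

lemma binomialTree_adj_of_eq_clearTopBit (ha : (a : ℕ) ≠ 0) (hb : (b : ℕ) = clearTopBit a) :
    (binomialTree k).Adj a b :=
  binomialTree_adj.2 (Or.inl ⟨ha, hb⟩)

lemma eRestrict_adj_of_eq_clearTopBit (ha : (a : ℕ) ≠ 0) (hb : (b : ℕ) = clearTopBit a)
    (hax : a ≠ x) (hy : (y : ℕ) = clearTopBit x) (haS : a ∈ S) (hbS : b ∈ S) :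
    (eRestrict (binomialTree k) S x y).Adj b a := by
  refine eRestrict_adj.2 ⟨(binomialTree_adj_of_eq_clearTopBit ha hb).symm, hbS, haS, fun h => ?_⟩
  rcases Sym2.eq_iff.1 h with ⟨rfl, rfl⟩ | ⟨-, rfl⟩
  · have := clearTopBit_lt ha
    have : clearTopBit b ≤ b := Nat.sub_le _ _
    omega
  · exact hax rfl

lemma residueClass_log_succ_subset (hxr : (x : ℕ) % 2 ^ m = r) (hm : m ≤ Nat.log 2 x) :
    residueClass _ (Nat.log 2 x + 1) x ⊆ residueClass (2 ^ (k - 1)) m r :=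
  hxr ▸ residueClass_subset (by omega)

lemma mem_residueClass_iff_of_eRestrict_adj (hx : (x : ℕ) ≠ 0) (hy : (y : ℕ) = clearTopBit x)
    (hab : (eRestrict (binomialTree k) S x y).Adj a b) :
    a ∈ residueClass _ (Nat.log 2 x + 1) x ↔ b ∈ residueClass _ (Nat.log 2 x + 1) x := by
  obtain ⟨hT, -, -, hne⟩ := eRestrict_adj.1 hab
  have parent : ∀ c d : Fin (2 ^ (k - 1)), (c : ℕ) ≠ 0 → (d : ℕ) = clearTopBit c →
      s(c, d) ≠ s(x, y) →
      (c ∈ residueClass _ (Nat.log 2 x + 1) x ↔ d ∈ residueClass _ (Nat.log 2 x + 1) x) := by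
    intro c d hc hd hcd
    have hcx : (c : ℕ) ≠ x := fun h => hcd (by rw [Fin.ext h, Fin.ext (hd.trans (h ▸ hy.symm))])
    rw [mem_residueClass, mem_residueClass, hd]
    exact (clearTopBit_mod_eq_iff hc hx hcx).symm
  rcases binomialTree_adj.1 hT with ⟨ha, hb⟩ | ⟨hb, ha⟩
  · exact parent a b ha hb hne
  · exact (parent b a hb ha (by rwa [Sym2.eq_swap])).symm

lemma side_binomialTree_self (hx : (x : ℕ) ≠ 0) (hy : (y : ℕ) = clearTopBit x)
    (hxr : (x : ℕ) % 2 ^ m = r) (hm : m ≤ Nat.log 2 x) :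
    side (binomialTree k) (residueClass _ m r) x y x = residueClass _ (Nat.log 2 x + 1) x := by
  refine side_eq_of_adj_closed (mem_residueClass_log_succ x)
    (fun a b hab => (mem_residueClass_iff_of_eRestrict_adj hx hy hab).1)
    (reachable_of_descent Fin.val fun a ha hax => ?_)
  obtain ⟨b, hb, ha0, hba⟩ := clearTopBit_mem_residueClass ha (Fin.val_ne_of_ne hax)
  have hsub := residueClass_log_succ_subset hxr hm
  exact ⟨b, hb, eRestrict_adj_of_eq_clearTopBit ha0 hba hax hy (hsub ha) (hsub hb),
    hba ▸ clearTopBit_lt ha0⟩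

lemma side_binomialTree_clearTopBit (hx : (x : ℕ) ≠ 0) (hy : (y : ℕ) = clearTopBit x)
    (hxr : (x : ℕ) % 2 ^ m = r) (hm : m ≤ Nat.log 2 x) :
    side (binomialTree k) (residueClass _ m r) x y y =
      residueClass _ m r \ residueClass _ (Nat.log 2 x + 1) x := by
  set A := residueClass (2 ^ (k - 1)) (Nat.log 2 x + 1) x
  have hyx : (y : ℕ) < x := hy ▸ clearTopBit_lt hx
  have hyS : y ∈ residueClass _ m r := by
    rw [mem_residueClass, hy, clearTopBit_mod_two_pow hx hm, hxr]
  have hyA : y ∉ A := by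
    rw [mem_residueClass, Nat.mod_eq_of_lt (hyx.trans (Nat.lt_pow_succ_log_self one_lt_two _))]
    omega
  let ρ : Fin (2 ^ (k - 1)) := ⟨r, lt_of_le_of_lt (hxr ▸ Nat.mod_le _ _) x.isLt⟩
  have hreach : ∀ a ∈ residueClass _ m r \ A,
      (eRestrict (binomialTree k) (residueClass _ m r) x y).Reachable ρ a := by
    refine reachable_of_descent Fin.val fun a ⟨haS, haA⟩ haρ => ?_
    obtain ⟨b, hbS, ha0, hba⟩ := clearTopBit_mem_residueClass haS (fun h => haρ (Fin.ext h))
    have hax : a ≠ x := fun h => haA (h ▸ mem_residueClass_log_succ x)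
    have hadj := eRestrict_adj_of_eq_clearTopBit ha0 hba hax hy haS hbS
    exact ⟨b, ⟨hbS, fun hbA => haA ((mem_residueClass_iff_of_eRestrict_adj hx hy hadj).1 hbA)⟩,
      hadj, hba ▸ clearTopBit_lt ha0⟩
  refine side_eq_of_adj_closed ⟨hyS, hyA⟩ (fun a b hab ⟨_, haA⟩ => ⟨(eRestrict_adj.1 hab).2.2.1,
    fun hbA => haA ((mem_residueClass_iff_of_eRestrict_adj hx hy hab).2 hbA)⟩)
    fun a ha => (hreach y ⟨hyS, hyA⟩).symm.trans (hreach a ha)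

lemma sideDiff_binomialTree (hx : (x : ℕ) ≠ 0) (hy : (y : ℕ) = clearTopBit x)
    (hxr : (x : ℕ) % 2 ^ m = r) (hm : m ≤ Nat.log 2 x) :
    sideDiff (binomialTree k) (residueClass _ m r) x y =
      2 ^ (k - 1 - m) - 2 ^ (k - 1 - Nat.log 2 x) := by
  have hL : Nat.log 2 x < k - 1 := Nat.log_lt_of_lt_pow hx x.isLt
  have hr : r < 2 ^ m := hxr ▸ Nat.mod_lt _ (Nat.two_pow_pos m)
  rw [sideDiff, side_binomialTree_self hx hy hxr hm, side_binomialTree_clearTopBit hx hy hxr hm,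
    Set.ncard_sdiff (residueClass_log_succ_subset hxr hm),
    ncard_residueClass (j := Nat.log 2 x + 1) (by omega) (Nat.lt_pow_succ_log_self one_lt_two _),
    ncard_residueClass (by omega) hr]
  have hhalf : 2 ^ (k - 1 - Nat.log 2 x) = 2 * 2 ^ (k - 1 - (Nat.log 2 x + 1)) := by
    rw [← pow_succ']
    congr 1
    omega
  have hle : 2 ^ (k - 1 - Nat.log 2 x) ≤ 2 ^ (k - 1 - m) :=
    Nat.pow_le_pow_right two_pos (by omega)
  omega

lemma eq_two_pow_add_of_sideDiff_eq_zero (hu : (u : ℕ) ≠ 0) (hv : (v : ℕ) = clearTopBit u)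
    (huS : u ∈ residueClass _ m r) (hvS : v ∈ residueClass _ m r)
    (h0 : sideDiff (binomialTree k) (residueClass _ m r) u v = 0) :
    (u : ℕ) = 2 ^ m + r ∧ (v : ℕ) = r := by
  have hvu := hv ▸ clearTopBit_lt hu
  have hm : m ≤ Nat.log 2 u := by
    by_contra! h
    have hu' : (u : ℕ) < 2 ^ m :=
      (Nat.lt_pow_succ_log_self one_lt_two u).trans_le (Nat.pow_le_pow_right two_pos h)
    rw [mem_residueClass, Nat.mod_eq_of_lt hu'] at huS
    rw [mem_residueClass, Nat.mod_eq_of_lt (hvu.trans hu')] at hvS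
    omega
  have hL : Nat.log 2 u < k - 1 := Nat.log_lt_of_lt_pow hu u.isLt
  rw [sideDiff_binomialTree hu hv huS hm, Nat.sub_eq_zero_iff_le,
    Nat.pow_le_pow_iff_right one_lt_two] at h0
  have hlog : Nat.log 2 u = m := by omega
  have hvr : (v : ℕ) = r := by
    rw [← hvS, Nat.mod_eq_of_lt (hlog ▸ hv ▸ clearTopBit_lt_two_pow_log hu)]
  have hsum := two_pow_log_add_clearTopBit hu
  rw [hlog, ← hv] at hsum
  omega

lemma isSplitDepth_residueClass_of_succ {d₁ d₂ : ℕ} (hr : r < 2 ^ m)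
    (hX : (x : ℕ) = 2 ^ m + r) (hY : (y : ℕ) = r)
    (h₁ : IsSplitDepth (binomialTree k) (residueClass _ (m + 1) (2 ^ m + r)) d₁)
    (h₂ : IsSplitDepth (binomialTree k) (residueClass _ (m + 1) r) d₂) :
    IsSplitDepth (binomialTree k) (residueClass _ m r) (1 + max d₁ d₂) := by
  have hx : (x : ℕ) ≠ 0 := by have := Nat.two_pow_pos m; omega
  have hxy : (y : ℕ) = clearTopBit x := by rw [hX, hY, clearTopBit_two_pow_add hr]
  have hlog : Nat.log 2 x = m := hX ▸ log_two_pow_add hr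
  have hxS : x ∈ residueClass _ m r := by
    rw [mem_residueClass, hX, Nat.add_mod_left, Nat.mod_eq_of_lt hr]
  have hyS : y ∈ residueClass _ m r := by rw [mem_residueClass, hY, Nat.mod_eq_of_lt hr]
  have hadj := binomialTree_adj_of_eq_clearTopBit hx hxy
  have h0 : sideDiff (binomialTree k) (residueClass _ m r) x y = 0 := by
    rw [sideDiff_binomialTree hx hxy hxS hlog.ge, hlog, Nat.sub_self]
  have hb : BalancedIn (binomialTree k) (residueClass _ m r) x y :=
    ⟨hadj, hxS, hyS, fun _ _ _ _ _ => h0 ▸ Nat.zero_le _⟩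
  have huniq : ∀ u v, BalancedIn (binomialTree k) (residueClass _ m r) u v → s(u, v) = s(x, y) := by
    rintro u v ⟨huv, huS, hvS, hmin⟩
    have h0' := Nat.le_zero.1 (h0 ▸ hmin x y hadj hxS hyS)
    rcases binomialTree_adj.1 huv with ⟨hu, hv⟩ | ⟨hv, hu⟩
    · obtain ⟨hux, hvy⟩ := eq_two_pow_add_of_sideDiff_eq_zero hu hv huS hvS h0'
      rw [Fin.ext (hux.trans hX.symm), Fin.ext (hvy.trans hY.symm)]
    · obtain ⟨hvx, huy⟩ := eq_two_pow_add_of_sideDiff_eq_zero hv hu hvS huS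
        (sideDiff_comm.trans h0')
      rw [Fin.ext (hvx.trans hX.symm), Fin.ext (huy.trans hY.symm), Sym2.eq_swap]
  refine IsSplitDepth.of_balancedIn hb huniq ?_ ?_
  · rwa [side_binomialTree_self hx hxy hxS hlog.ge, hlog, hX]
  · rwa [side_binomialTree_clearTopBit hx hxy hxS hlog.ge, hlog, hX,
      residueClass_diff_residueClass_two_pow_add hr]

theorem isSplitDepth_residueClass (hm : m ≤ k - 1) (hr : r < 2 ^ m) :
    IsSplitDepth (binomialTree k) (residueClass _ m r) (k - 1 - m) := by
  induction hK : k - 1 - m generalizing m r with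
  | zero =>
    obtain rfl : m = k - 1 := by omega
    rw [residueClass_eq_singleton hr]
    exact isSplitDepth_singleton _
  | succ t ih =>
    have hr' : 2 ^ m + r < 2 ^ (m + 1) := by rw [pow_succ]; omega
    have hX : 2 ^ m + r < 2 ^ (k - 1) := hr'.trans_le (Nat.pow_le_pow_right two_pos (by omega))
    have h := isSplitDepth_residueClass_of_succ (x := ⟨2 ^ m + r, hX⟩) (y := ⟨r, by omega⟩) hr
      rfl rfl (ih (by omega) hr' (by omega)) (ih (by omega) (by omega) (by omega))
    rwa [max_self, add_comm] at h

end BinomialTree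

theorem splitDepth_binomialTree_general (k : ℕ) :
    (∃ d : ℕ, SplitDepth (binomialTree k) Set.univ d) ∧
    ∀ d : ℕ, SplitDepth (binomialTree k) Set.univ d → d = k - 1 := by
  have h := isSplitDepth_residueClass (k := k) (Nat.zero_le _) (Nat.two_pow_pos 0)
  rw [residueClass_zero_zero, Nat.sub_zero] at h
  exact ⟨⟨_, h.1⟩, h.2⟩

/-- For the binomial tree `B_k` (`k ≥ 2`), the recursive balanced-edge-splitting
depth is well defined and equals `k - 1`. -/
theorem splitDepth_binomialTree (k : ℕ) (hk : 2 ≤ k) :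
    (∃ d : ℕ, SplitDepth (binomialTree k) Set.univ d) ∧
    ∀ d : ℕ, SplitDepth (binomialTree k) Set.univ d → d = k - 1 :=
  splitDepth_binomialTree_general k
end

section
/- For the binomial tree B_k with 2^{k−1} vertices (k ≥ 2), cfc(B_k) = k−1. -/
/-!
Color the edge from a nonzero vertex `x` to its parent (`x` with its top bit removed) by the
position of that bit. For `u ≠ v`, let `d` be the lowest bit where they differ: climbing from
`u` and from `v` until only the bits below `d` are left reaches the same vertex, and color `d`
occurs exactly once on the combined walk. In a forest the parity of the number of edges of a
given color on a walk depends only on its endpoints, so bypassing the walk to a path keeps that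
single occurrence.

The same parity fact gives the lower bound: for a conflict-free coloring of a tree with `m`
colors, the parities of the colors on the walks to a fixed root separate the vertices, so a tree
on `2 ^ (k - 1)` vertices needs `m ≥ k - 1`.
-/

namespace Nat

theorem sub_two_pow_log_eq_mod (x : ℕ) : x - 2 ^ Nat.log 2 x = x % 2 ^ Nat.log 2 x := by
  rcases eq_or_ne x 0 with rfl | hx
  · simp
  have hlow := Nat.pow_log_le_self 2 hx
  have hhigh : x < 2 ^ Nat.log 2 x * 2 :=
    pow_succ 2 (Nat.log 2 x) ▸ Nat.lt_pow_succ_log_self one_lt_two x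
  rw [Nat.mod_eq_sub_mod hlow, Nat.mod_eq_of_lt (by omega)]

theorem testBit_log_two_self {x : ℕ} (hx : x ≠ 0) : x.testBit (Nat.log 2 x) = true :=
  Nat.log2_eq_log_two ▸ Nat.testBit_log2 hx

theorem testBit_mod_two_pow_log_of_ne {x i : ℕ} (hi : i ≠ Nat.log 2 x) :
    (x % 2 ^ Nat.log 2 x).testBit i = x.testBit i := by
  rw [Nat.testBit_mod_two_pow]
  rcases lt_or_gt_of_ne hi with hlt | hgt
  · simp [hlt]
  · rw [Nat.testBit_lt_two_pow ((Nat.lt_pow_succ_log_self one_lt_two x).trans_le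
      (Nat.pow_le_pow_right two_pos hgt))]
    simp

theorem exists_testBit_ne_and_mod_two_pow_eq {u v : ℕ} (h : u ≠ v) :
    ∃ d, u.testBit d ≠ v.testBit d ∧ u % 2 ^ d = v % 2 ^ d := by
  classical
  have hex := Nat.exists_testBit_ne_of_ne h
  refine ⟨Nat.find hex, Nat.find_spec hex, Nat.eq_of_testBit_eq fun i => ?_⟩
  simp only [Nat.testBit_mod_two_pow]
  by_cases hi : i < Nat.find hex
  · simp [hi, not_not.1 (Nat.find_min hex hi)]
  · simp [hi]

end Nat

namespace SimpleGraph

variable {V : Type*} {G : SimpleGraph V}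

theorem IsAcyclic.cast_length_filter_edges_bypass [DecidableEq V] (hG : G.IsAcyclic)
    (s : Sym2 V → Bool) {u v : V} (p : G.Walk u v) :
    ((p.bypass.edges.filter s).length : ZMod 2) = (p.edges.filter s).length := by
  induction p with
  | nil => rfl
  | @cons u v w h p ih =>
    rw [Walk.bypass]
    split_ifs with hs
    · have htake : p.bypass.takeUntil u hs = .cons h.symm .nil :=
        congrArg Subtype.val <| (hG.subsingleton_path v u).elim
          ⟨_, p.bypass_isPath.takeUntil hs⟩ (Path.singleton h.symm)
      have hsplit := congrArg (fun q => ((q.edges.filter s).length : ZMod 2))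
        (p.bypass.take_spec hs)
      simp only [Walk.edges_append, htake, Walk.edges_cons, Walk.edges_nil, List.filter_append,
        List.length_append, Nat.cast_add, ih, Sym2.eq_swap (a := v)] at hsplit
      rw [Walk.edges_cons, List.filter_cons]
      split_ifs with hsuv
      · simp only [hsuv, List.filter_cons_of_pos, List.filter_nil, List.length_cons,
          List.length_nil, zero_add, Nat.cast_one, Nat.cast_add] at hsplit ⊢
        rw [← hsplit, add_right_comm, CharTwo.add_self_eq_zero, zero_add]
      · simpa [hsuv] using hsplit
    · simp only [Walk.edges_cons, List.filter_cons]
      split_ifs <;> simp [ih]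

theorem IsAcyclic.cast_length_filter_edges_eq (hG : G.IsAcyclic) (s : Sym2 V → Bool) {u v : V}
    (p q : G.Walk u v) :
    ((p.edges.filter s).length : ZMod 2) = (q.edges.filter s).length := by
  classical
  have hbypass : p.bypass = q.bypass :=
    congrArg Subtype.val <| (hG.subsingleton_path u v).elim p.toPath q.toPath
  rw [← hG.cast_length_filter_edges_bypass, hbypass, hG.cast_length_filter_edges_bypass]

theorem IsAcyclic.length_filter_edges_bypass_eq_one [DecidableEq V] (hG : G.IsAcyclic)
    (s : Sym2 V → Bool) {u v : V} (p : G.Walk u v) (hp : (p.edges.filter s).length = 1) :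
    (p.bypass.edges.filter s).length = 1 := by
  have hle : (p.bypass.edges.filter s).length ≤ 1 :=
    hp ▸ ((p.edges_bypass_sublist_edges).filter s).length_le
  have hodd := hG.cast_length_filter_edges_bypass s p
  rw [hp] at hodd
  interval_cases h : (p.bypass.edges.filter s).length
  · simp at hodd
  · rfl

theorem IsTree.card_le_two_pow_of_isCFCColoring [Fintype V] (hG : G.IsTree) {c : Sym2 V → ℕ}
    {m : ℕ} (hc : ∀ e ∈ G.edgeSet, c e < m) (hcfc : IsCFCColoring G c) :
    Fintype.card V ≤ 2 ^ m := by
  obtain ⟨r⟩ := hG.connected.nonempty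
  let toRoot (x : V) : G.Walk x r := (hG.connected x r).some
  let parities (x : V) (i : Fin m) : ZMod 2 :=
    ((toRoot x).edges.filter (fun e => c e = i)).length
  suffices Function.Injective parities by
    simpa using Fintype.card_le_of_injective _ this
  intro u v huv
  by_contra hne
  obtain ⟨q, -, col, hq⟩ := hcfc u v hne
  have hcol : col < m := by
    by_contra! hm
    have : q.edges.filter (fun e => c e = col) = [] :=
      List.filter_eq_nil_iff.2 fun e he => by
        simpa using ((hc e (q.edges_subset_edgeSet he)).trans_le hm).ne
    simp [this] at hq
  have hparity := hG.isAcyclic.cast_length_filter_edges_eq (fun e => c e = col)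
    (q.append (toRoot v)) (toRoot u)
  have huv' := congrFun huv ⟨col, hcol⟩
  simp only [parities] at huv'
  rw [Walk.edges_append, List.filter_append, List.length_append, hq, huv'] at hparity
  simp at hparity

end SimpleGraph

namespace binomialTree

open SimpleGraph

variable {k : ℕ}

def parent (x : Fin (2 ^ (k - 1))) : Fin (2 ^ (k - 1)) :=
  ⟨x % 2 ^ Nat.log 2 x, (Nat.mod_le _ _).trans_lt x.isLt⟩

theorem val_parent (x : Fin (2 ^ (k - 1))) : (parent x : ℕ) = x % 2 ^ Nat.log 2 x := rfl

theorem parent_lt {x : Fin (2 ^ (k - 1))} (hx : (x : ℕ) ≠ 0) : parent x < x :=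
  (Nat.mod_lt _ (Nat.two_pow_pos _)).trans_le (Nat.pow_log_le_self 2 hx)

theorem adj_iff {x y : Fin (2 ^ (k - 1))} :
    (binomialTree k).Adj x y ↔ (x : ℕ) ≠ 0 ∧ y = parent x ∨ (y : ℕ) ≠ 0 ∧ x = parent y := by
  have hrel (a b : Fin (2 ^ (k - 1))) :
      ((a : ℕ) ≠ 0 ∧ (b : ℕ) = a - 2 ^ Nat.log 2 a) ↔ (a : ℕ) ≠ 0 ∧ b = parent a := by
    rw [Nat.sub_two_pow_log_eq_mod, Fin.ext_iff, val_parent]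
  rw [binomialTree, fromRel_adj, hrel, hrel, and_iff_right_iff_imp]
  rintro (⟨hx, rfl⟩ | ⟨hy, rfl⟩)
  · exact (parent_lt hx).ne'
  · exact (parent_lt hy).ne

theorem adj_parent {x : Fin (2 ^ (k - 1))} (hx : (x : ℕ) ≠ 0) :
    (binomialTree k).Adj x (parent x) :=
  adj_iff.2 (Or.inl ⟨hx, rfl⟩)

def topBitColoring (e : Sym2 (Fin (2 ^ (k - 1)))) : ℕ := Nat.log 2 e.sup

theorem topBitColoring_parent {x : Fin (2 ^ (k - 1))} (hx : (x : ℕ) ≠ 0) :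
    topBitColoring s(x, parent x) = Nat.log 2 x := by
  rw [topBitColoring, Sym2.sup_mk, sup_eq_left.2 (parent_lt hx).le]

theorem topBitColoring_lt {e : Sym2 (Fin (2 ^ (k - 1)))} (he : e ∈ (binomialTree k).edgeSet) :
    topBitColoring e < k - 1 := by
  induction e using Sym2.ind with
  | _ x y =>
    rw [mem_edgeSet] at he
    rcases adj_iff.1 he with ⟨hx, rfl⟩ | ⟨hy, rfl⟩
    · rw [topBitColoring_parent hx]
      exact Nat.log_lt_of_lt_pow hx x.isLt
    · rw [Sym2.eq_swap, topBitColoring_parent hy]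
      exact Nat.log_lt_of_lt_pow hy y.isLt

theorem exists_walk_mod_two_pow (j : ℕ) (x w : Fin (2 ^ (k - 1))) (hw : (w : ℕ) = x % 2 ^ j) :
    ∃ p : (binomialTree k).Walk x w, ∀ col,
      (p.edges.filter (fun e => topBitColoring e = col)).length =
        if j ≤ col ∧ (x : ℕ).testBit col then 1 else 0 := by
  induction x using WellFoundedLT.induction with
  | _ x ih =>
    rcases lt_or_ge (x : ℕ) (2 ^ j) with hlt | hge
    · obtain rfl : w = x := Fin.ext (hw.trans (Nat.mod_eq_of_lt hlt))
      refine ⟨.nil, fun col => ?_⟩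
      rw [if_neg]
      · rfl
      rintro ⟨hj, hbit⟩
      rw [Nat.testBit_lt_two_pow (hlt.trans_le (Nat.pow_le_pow_right two_pos hj))] at hbit
      exact Bool.false_ne_true hbit
    have hx : (x : ℕ) ≠ 0 := (Nat.two_pow_pos j).trans_le hge |>.ne'
    have hj : j ≤ Nat.log 2 x := Nat.le_log_of_pow_le one_lt_two hge
    obtain ⟨p, hp⟩ := ih (parent x) (parent_lt hx) (by
      rw [hw, val_parent, Nat.mod_mod_of_dvd _ (pow_dvd_pow 2 hj)])
    refine ⟨.cons (adj_parent hx) p, fun col => ?_⟩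
    rw [Walk.edges_cons, List.filter_cons, topBitColoring_parent hx]
    rcases eq_or_ne col (Nat.log 2 x) with rfl | hcol
    · simp [hp, val_parent, hj, Nat.testBit_log_two_self hx]
    · simp [hp, val_parent, Ne.symm hcol, Nat.testBit_mod_two_pow_log_of_ne hcol]

theorem connected (k : ℕ) : (binomialTree k).Connected := by
  have hroot (x : Fin (2 ^ (k - 1))) : (binomialTree k).Reachable x 0 :=
    (exists_walk_mod_two_pow 0 x 0 (Nat.mod_one _).symm).elim fun p _ => ⟨p⟩
  exact (connected_iff _).2 ⟨fun x y => (hroot x).trans (hroot y).symm, ⟨0⟩⟩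

theorem isTree (k : ℕ) : (binomialTree k).IsTree := by
  let edgeToParent (x : {x : Fin (2 ^ (k - 1)) // (x : ℕ) ≠ 0}) : (binomialTree k).edgeSet :=
    ⟨s(x, parent x), adj_parent x.2⟩
  have hbij : Function.Bijective edgeToParent := by
    constructor
    · rintro ⟨x, hx⟩ ⟨y, hy⟩ hxy
      have hxy : s(x, parent x) = s(y, parent y) := congrArg Subtype.val hxy
      rw [Sym2.eq_iff] at hxy
      rcases hxy with ⟨rfl, -⟩ | ⟨rfl, hyx⟩
      · rfl
      · have := parent_lt hx
        rw [hyx] at this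
        exact absurd this (parent_lt hy).not_gt
    · rintro ⟨e, he⟩
      induction e using Sym2.ind with
      | _ x y =>
        rw [mem_edgeSet] at he
        rcases adj_iff.1 he with ⟨hx, rfl⟩ | ⟨hy, rfl⟩
        · exact ⟨⟨x, hx⟩, rfl⟩
        · exact ⟨⟨y, hy⟩, Subtype.ext Sym2.eq_swap⟩
  rw [isTree_iff_connected_and_card, ← Nat.card_eq_of_bijective _ hbij]
  refine ⟨connected k, ?_⟩
  simpa [Nat.card_eq_fintype_card, Fintype.card_subtype_compl] using
    Nat.sub_add_cancel Nat.one_le_two_pow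

theorem isCFCColoring_topBitColoring (k : ℕ) :
    IsCFCColoring (binomialTree k) topBitColoring := by
  intro u v huv
  obtain ⟨d, hbit, hmod⟩ := Nat.exists_testBit_ne_and_mod_two_pow_eq (Fin.val_ne_of_ne huv)
  let w : Fin (2 ^ (k - 1)) := ⟨u % 2 ^ d, (Nat.mod_le _ _).trans_lt u.isLt⟩
  obtain ⟨pu, hpu⟩ := exists_walk_mod_two_pow d u w rfl
  obtain ⟨pv, hpv⟩ := exists_walk_mod_two_pow d v w hmod
  have hunique :
      ((pu.append pv.reverse).edges.filter (fun e => topBitColoring e = d)).length = 1 := by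
    rw [Walk.edges_append, Walk.edges_reverse, List.filter_append, List.filter_reverse,
      List.length_append, List.length_reverse, hpu, hpv]
    revert hbit
    cases (u : ℕ).testBit d <;> cases (v : ℕ).testBit d <;> simp
  exact ⟨_, Walk.bypass_isPath _, d,
    (isTree k).isAcyclic.length_filter_edges_bypass_eq_one _ _ hunique⟩

end binomialTree

theorem cfc_binomialTree_general (k : ℕ) :
    cfcNum (binomialTree k) = k - 1 := by
  have hmem : k - 1 ∈ {m | ∃ c : Sym2 _ → ℕ,
      (∀ e ∈ (binomialTree k).edgeSet, c e < m) ∧ IsCFCColoring (binomialTree k) c} :=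
    ⟨binomialTree.topBitColoring, fun _ => binomialTree.topBitColoring_lt,
      binomialTree.isCFCColoring_topBitColoring k⟩
  refine le_antisymm (Nat.sInf_le hmem) (le_csInf ⟨_, hmem⟩ ?_)
  rintro m ⟨c, hc, hcfc⟩
  have hcard := (binomialTree.isTree k).card_le_two_pow_of_isCFCColoring hc hcfc
  rwa [Fintype.card_fin, Nat.pow_le_pow_iff_right one_lt_two] at hcard

/-- For the binomial tree `B_k` with `2^(k-1)` vertices (`k ≥ 2`),
`cfc(B_k) = k - 1`. -/
theorem cfc_binomialTree (k : ℕ) (hk : 2 ≤ k) :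
    cfcNum (binomialTree k) = k - 1 :=
  cfc_binomialTree_general k
end
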